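/- arXiv:1703.04326 — 6 statements merged into one kernel-verified Lean document; each statement's English description precedes it below -/
import Mathlib

section
/- Let Φ = {φ_ν}_{ν=1}^∞ be a sequence of convex functions in 𝒜(ℝⁿ) satisfying condition (i₀): for each ν ∈ ℕ and each A > 0 there exists C_{ν,A} > 0 such that φ_ν(x) + A·ln(1+‖x‖) ≤ φ_{ν+1}(x) + C_{ν,A} for all x ∈ ℝⁿ; condition (i₂): for each ν there exists K_ν > 0 with φ_ν(x+ξ) ≤ φ_{ν+1}(x) + K_ν for all x ∈ [0,∞)ⁿ and ξ ∈ [0,1]ⁿ; and condition (i₃): for each ν there exists a_ν > 0 with φ_ν(2x) ≤ φ_{ν+1}(x) + a_ν for all x ∈ ℝⁿ. Set ψ_ν = φ_ν[e]. Then the spaces G(Ψ*) = ∪_ν G(ψ*_ν) and GS(Φ*) = ∪_ν GS(φ*_ν) coincide as sets of functions: a function f ∈ C^∞(ℝⁿ) belongs to G(ψ*_ν) for some ν if and only if it belongs to GS(φ*_μ) for some μ. -/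
open MeasureTheory Filter
open scoped BigOperators Topology

noncomputable section

abbrev En (n : ℕ) := EuclideanSpace ℝ (Fin n)
abbrev Cn (n : ℕ) := EuclideanSpace ℂ (Fin n)

def expComp {n : ℕ} (g : En n → ℝ) : En n → ℝ := fun x => g (WithLp.toLp 2 (fun j => Real.exp (x j)))

def starC {n : ℕ} (g : En n → ℝ) (x : En n) : ℝ := ⨆ y : En n, (∑ j, x j * y j - g y)

def imv {n : ℕ} (z : Cn n) : En n := WithLp.toLp 2 (fun j => (z j).im)

def toC {n : ℕ} (x : En n) : Cn n := WithLp.toLp 2 (fun j => ((x j : ℝ) : ℂ))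

def pd {n : ℕ} (i : Fin n) (f : En n → ℂ) : En n → ℂ :=
  fun x => fderiv ℝ f x (EuclideanSpace.single i (1:ℝ))

def Dm {n : ℕ} (α : Fin n → ℕ) (f : En n → ℂ) : En n → ℂ :=
  (List.finRange n).foldr (fun i g => (pd i)^[α i] g) f

def IsA {n : ℕ} (g : En n → ℝ) : Prop :=
  Continuous g ∧ (∀ x : En n, g x = g (WithLp.toLp 2 (fun j => |x j|))) ∧
  (∀ x y : En n, (∀ j, 0 ≤ x j) → (∀ j, x j ≤ y j) → g x ≤ g y) ∧
  Tendsto (fun x : En n => g x / ‖x‖) (cocompact (En n)) atTop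

def pWeight {n : ℕ} (φ : En n → ℝ) (m : ℕ) (f : Cn n → ℂ) (z : Cn n) : ℝ :=
  ‖f z‖ * (1 + ‖z‖) ^ m * Real.exp (-(φ (imv z)))

def pNorm {n : ℕ} (φ : En n → ℝ) (m : ℕ) (f : Cn n → ℂ) : ℝ := ⨆ z : Cn n, pWeight φ m f z

def memE {n : ℕ} (φ : En n → ℝ) (f : Cn n → ℂ) : Prop :=
  Differentiable ℂ f ∧ ∀ m : ℕ, BddAbove (Set.range (pWeight φ m f))

def rhoWeight {n : ℕ} (ψ : En n → ℝ) (m : ℕ) (f : En n → ℂ) (x : En n) (α : Fin n → ℕ) : ℝ :=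
  (1 + ‖x‖) ^ m * ‖Dm α f x‖ * Real.exp (starC ψ (WithLp.toLp 2 (fun j => (α j : ℝ)))) / (∏ j, Nat.factorial (α j) : ℝ)

def rhoNorm {n : ℕ} (ψ : En n → ℝ) (m : ℕ) (f : En n → ℂ) : ℝ :=
  ⨆ p : En n × (Fin n → ℕ), rhoWeight ψ m f p.1 p.2

def memEps {n : ℕ} (ψ : En n → ℝ) (f : En n → ℂ) : Prop :=
  ContDiff ℝ (⊤ : ℕ∞) f ∧ ∀ m : ℕ, BddAbove (Set.range fun p : En n × (Fin n → ℕ) => rhoWeight ψ m f p.1 p.2)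


def gWeight {n : ℕ} (ψ : En n → ℝ) (f : En n → ℂ) (x : En n) (α β : Fin n → ℕ) : ℝ :=
  (∏ j, |x j| ^ (β j)) * ‖Dm α f x‖ *
    Real.exp (starC ψ (WithLp.toLp 2 (fun j => (β j : ℝ)))) / (∏ j, Nat.factorial (β j) : ℝ)

def memG {n : ℕ} (ψ : En n → ℝ) (f : En n → ℂ) : Prop :=
  ContDiff ℝ (⊤ : ℕ∞) f ∧ ∀ m : ℕ,
    BddAbove (Set.range fun p : {q : En n × (Fin n → ℕ) × (Fin n → ℕ) // ∑ i, q.2.1 i ≤ m} =>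
      gWeight ψ f p.1.1 p.1.2.1 p.1.2.2)

def gsWeight {n : ℕ} (φ : En n → ℝ) (f : En n → ℂ) (x : En n) (α : Fin n → ℕ) : ℝ :=
  ‖Dm α f x‖ * Real.exp (starC φ x)

def memGS {n : ℕ} (φ : En n → ℝ) (f : En n → ℂ) : Prop :=
  ContDiff ℝ (⊤ : ℕ∞) f ∧ ∀ m : ℕ,
    BddAbove (Set.range fun p : {q : En n × (Fin n → ℕ) // ∑ i, q.2 i ≤ m} =>
      gsWeight φ f p.1.1 p.1.2)

namespace Stmt3Aux

variable {n : ℕ}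

lemma inner_le_norm' (x y : En n) : ∑ j, x j * y j ≤ ‖x‖ * ‖y‖ := by
  have := real_inner_le_norm x y
  rw [PiLp.inner_apply] at this
  simpa [RCLike.inner_apply, conj_trivial, mul_comm] using this

lemma coord_le (x : En n) (j : Fin n) : |x j| ≤ ‖x‖ := by
  rw [EuclideanSpace.norm_eq, ← Real.sqrt_sq_eq_abs]
  apply Real.sqrt_le_sqrt
  have := Finset.single_le_sum (f := fun i => ‖x i‖^2) (by intro i _; positivity) (Finset.mem_univ j)
  simpa [Real.norm_eq_abs, sq_abs] using this

lemma coercive {g : En n → ℝ} (hg : IsA g) (R : ℝ) : ∃ M : ℝ, 0 ≤ M ∧ ∀ ξ : En n, R * ‖ξ‖ - M ≤ g ξ := by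
  have hev : ∀ᶠ x in cocompact (En n), R ≤ g x / ‖x‖ := hg.2.2.2.eventually_ge_atTop R
  obtain ⟨K, hK, hKs⟩ := mem_cocompact.mp hev
  obtain ⟨r, hr⟩ := hK.isBounded.subset_closedBall 0
  set r' : ℝ := max r 0 with hr'
  have hball : K ⊆ Metric.closedBall 0 r' := hr.trans (Metric.closedBall_subset_closedBall (le_max_left _ _))
  obtain ⟨c, hc⟩ := ((isCompact_closedBall (0 : En n) r').image hg.1).bddBelow
  have hc' : ∀ ξ ∈ Metric.closedBall (0 : En n) r', c ≤ g ξ := fun ξ hξ => hc ⟨ξ, hξ, rfl⟩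
  refine ⟨max (|R| * r' - c) 0, le_max_right _ _, fun ξ => ?_⟩
  by_cases hmem : ξ ∈ Metric.closedBall (0 : En n) r'
  · have h1 : ‖ξ‖ ≤ r' := by simpa using Metric.mem_closedBall.mp hmem
    have h2 : c ≤ g ξ := hc' ξ hmem
    have h3 : R * ‖ξ‖ ≤ |R| * r' :=
      (mul_le_mul_of_nonneg_right (le_abs_self R) (norm_nonneg _)).trans
        (mul_le_mul_of_nonneg_left h1 (abs_nonneg R))
    have := le_max_left (|R| * r' - c) 0
    linarith
  · have hne : ξ ≠ 0 := by
      intro h; apply hmem; simp [h, hr', le_max_right]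
    have hpos : 0 < ‖ξ‖ := norm_pos_iff.mpr hne
    have hout : ξ ∈ Kᶜ := fun h => hmem (hball h)
    have hRle : R ≤ g ξ / ‖ξ‖ := hKs hout
    have h4 : R * ‖ξ‖ ≤ g ξ := by
      rw [← le_div_iff₀ hpos]; exact hRle
    have := le_max_right (|R| * r' - c) 0
    linarith

lemma bddA {g : En n → ℝ} (hg : IsA g) (y : En n) :
    BddAbove (Set.range fun ξ : En n => ∑ j, y j * ξ j - g ξ) := by
  obtain ⟨M, _, hM⟩ := coercive hg (‖y‖ + 1)
  refine ⟨M, ?_⟩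
  rintro v ⟨ξ, rfl⟩
  dsimp only
  have h1 : ∑ j, y j * ξ j ≤ ‖y‖ * ‖ξ‖ := inner_le_norm' y ξ
  have h2 := hM ξ
  nlinarith [norm_nonneg ξ]

lemma star_ge {g : En n → ℝ} (hg : IsA g) (y ξ : En n) :
    ∑ j, y j * ξ j - g ξ ≤ starC g y :=
  le_ciSup (bddA hg y) ξ

lemma star_le {g : En n → ℝ} {y : En n} {B : ℝ}
    (h : ∀ ξ : En n, ∑ j, y j * ξ j - g ξ ≤ B) : starC g y ≤ B :=
  ciSup_le h

lemma star_abs_ge {g : En n → ℝ} (hg : IsA g) (x ξ : En n) (hξ : ∀ j, 0 ≤ ξ j) :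
    ∑ j, |x j| * ξ j - g ξ ≤ starC g x := by
  set ξ' : En n := WithLp.toLp 2 (fun j => if 0 ≤ x j then ξ j else -ξ j) with hξ'
  have h1 : ∀ j, x j * ξ' j = |x j| * ξ j := by
    intro j
    by_cases h : 0 ≤ x j
    · simp [hξ', h, abs_of_nonneg h]
    · push_neg at h
      simp only [hξ', if_neg (not_le.mpr h), abs_of_neg h]
      ring
  have h2 : g ξ' = g ξ := by
    rw [hg.2.1 ξ']
    congr 1
    ext j
    by_cases h : 0 ≤ x j <;> simp [hξ', h, abs_of_nonneg (hξ j)]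
  have h3 := star_ge hg x ξ'
  rw [h2] at h3
  calc ∑ j, |x j| * ξ j - g ξ = ∑ j, x j * ξ' j - g ξ := by
        rw [Finset.sum_congr rfl (fun j _ => (h1 j).symm)]
    _ ≤ starC g x := h3

lemma star_lin {g : En n → ℝ} (hg : IsA g) (R : ℝ) (hR : 0 ≤ R) :
    ∃ M : ℝ, ∀ y : En n, R * ‖y‖ - M ≤ starC g y := by
  obtain ⟨Mg, hMg⟩ := ((isCompact_closedBall (0 : En n) R).image hg.1).bddAbove
  have hMg' : ∀ ξ ∈ Metric.closedBall (0 : En n) R, g ξ ≤ Mg := fun ξ hξ => hMg ⟨ξ, hξ, rfl⟩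
  refine ⟨Mg, fun y => ?_⟩
  by_cases hy : y = 0
  · subst hy
    have h0 : (0 : En n) ∈ Metric.closedBall (0 : En n) R := by simpa using hR
    have hg0 := hMg' 0 h0
    have h1 : (0 : ℝ) - g 0 ≤ starC g 0 := by simpa using star_ge hg 0 0
    simp only [norm_zero, mul_zero]
    linarith
  · have hpos : 0 < ‖y‖ := norm_pos_iff.mpr hy
    set ξ : En n := (R / ‖y‖) • y with hxi
    have hsum : ∑ j, y j * ξ j = R * ‖y‖ := by
      have hns : ∑ j, y j * y j = ‖y‖ ^ 2 := by
        have := real_inner_self_eq_norm_sq y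
        rw [PiLp.inner_apply] at this
        simpa [RCLike.inner_apply, conj_trivial, pow_two] using this
      have h5 : ∑ j, y j * ξ j = (R / ‖y‖) * ∑ j, y j * y j := by
        rw [Finset.mul_sum]
        refine Finset.sum_congr rfl fun j _ => ?_
        simp [hxi, PiLp.smul_apply, smul_eq_mul]; ring
      rw [h5, hns]
      field_simp
    have hmem : ξ ∈ Metric.closedBall (0 : En n) R := by
      simp only [Metric.mem_closedBall, dist_zero_right, hxi, norm_smul]
      rw [Real.norm_eq_abs, abs_div, abs_of_nonneg hR, abs_of_nonneg (norm_nonneg y)]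
      field_simp
      exact le_rfl
    have h6 := star_ge hg y ξ
    have h7 := hMg' ξ hmem
    linarith [hsum ▸ star_ge hg y ξ]

lemma bddA_psi {g : En n → ℝ} (hg : IsA g) (β : Fin n → ℕ) :
    BddAbove (Set.range fun η : En n => ∑ j, (β j : ℝ) * η j - expComp g η) := by
  obtain ⟨B, hB⟩ := bddA hg (WithLp.toLp 2 (fun j => (β j : ℝ)))
  refine ⟨B, ?_⟩
  rintro v ⟨η, rfl⟩
  have key : ∑ j, (β j : ℝ) * η j ≤ ∑ j, (β j : ℝ) * Real.exp (η j) := by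
    refine Finset.sum_le_sum fun j _ => ?_
    have h8 : η j ≤ Real.exp (η j) := (le_add_of_nonneg_right zero_le_one).trans (Real.add_one_le_exp _)
    exact mul_le_mul_of_nonneg_left h8 (Nat.cast_nonneg _)
  have h9 := hB ⟨(WithLp.toLp 2 (fun j => Real.exp (η j)) : En n), rfl⟩
  simp only [expComp]
  dsimp at h9 ⊢
  linarith

lemma psi_star_ge {g : En n → ℝ} (hg : IsA g) (β : Fin n → ℕ) (η : En n) :
    ∑ j, (β j : ℝ) * η j - g (WithLp.toLp 2 (fun j => Real.exp (η j))) ≤ starC (expComp g) (WithLp.toLp 2 (fun j => (β j : ℝ))) :=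
  le_ciSup (bddA_psi hg β) η

lemma psi_star_le {g : En n → ℝ} {β : Fin n → ℕ} {B : ℝ}
    (h : ∀ η : En n, ∑ j, (β j : ℝ) * η j - g (WithLp.toLp 2 (fun j => Real.exp (η j))) ≤ B) :
    starC (expComp g) (WithLp.toLp 2 (fun j => (β j : ℝ))) ≤ B :=
  ciSup_le h

lemma pow_le_fact_exp (s : ℝ) (hs : 0 ≤ s) (k : ℕ) :
    s ^ k ≤ (k.factorial : ℝ) * Real.exp s := by
  have h1 : s ^ k / (k.factorial : ℝ) ≤ Real.exp s := by
    have h0 := Real.sum_le_exp_of_nonneg hs (k+1)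
    have h2 : s ^ k / (k.factorial : ℝ) ≤ ∑ i ∈ Finset.range (k+1), s ^ i / i.factorial := by
      refine Finset.single_le_sum (f := fun i => s ^ i / (i.factorial : ℝ)) ?_ (Finset.self_mem_range_succ k)
      intro i _; positivity
    linarith
  have hk : (0:ℝ) < (k.factorial : ℝ) := by positivity
  calc s ^ k = s ^ k / (k.factorial:ℝ) * k.factorial := by field_simp
    _ ≤ Real.exp s * k.factorial := mul_le_mul_of_nonneg_right h1 (le_of_lt hk)
    _ = (k.factorial : ℝ) * Real.exp s := by ring

lemma fact_le (k : ℕ) (hk : 1 ≤ k) :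
    (k.factorial : ℝ) ≤ Real.exp 1 * k * (k:ℝ) ^ k * Real.exp (-(k:ℝ)) := by
  induction k with
  | zero => omega
  | succ m ih =>
    rcases Nat.eq_or_lt_of_le hk with h | h
    · have hm0 : m = 0 := by omega
      subst hm0
      norm_num
      rw [← Real.exp_add]
      norm_num
    · have hm : 1 ≤ m := by omega
      have ihm := ih hm
      have hmp : (0:ℝ) < m := by exact_mod_cast hm
      set t : ℝ := 1 / ((m:ℝ)+1) with ht
      have htpos : 0 < t := by positivity
      have h2 : (1 : ℝ) - t ≤ Real.exp (-t) := by
        have := Real.add_one_le_exp (-t); linarith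
      have h3 : (0:ℝ) < 1 - t := by
        rw [sub_pos, ht, div_lt_one (by linarith)]; linarith
      have h4 : Real.exp t ≤ (1 - t)⁻¹ := by
        rw [show Real.exp t = (Real.exp (-t))⁻¹ by rw [← Real.exp_neg, neg_neg]]
        exact inv_anti₀ h3 h2
      have h5 : (1 - t)⁻¹ = 1 + 1/(m:ℝ) := by
        rw [ht]; field_simp; rw [add_sub_cancel_right, div_self (ne_of_gt hmp)]
      have h6 : Real.exp 1 ≤ (1 + 1/(m:ℝ))^(m+1) := by
        have hp := pow_le_pow_left₀ (le_of_lt (Real.exp_pos t)) (h4.trans h5.le) (m+1)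
        have he : Real.exp t ^ (m+1) = Real.exp 1 := by
          rw [← Real.exp_nat_mul]
          congr 1
          rw [ht]
          push_cast
          field_simp
        rwa [he] at hp
      have key : Real.exp 1 * ((m:ℝ) ^ (m+1)) ≤ ((m:ℝ)+1)^(m+1) := by
        have h7 : (1 + 1/(m:ℝ))^(m+1) * (m:ℝ)^(m+1) = ((m:ℝ)+1)^(m+1) := by
          rw [← mul_pow]
          congr 1
          field_simp
        calc Real.exp 1 * ((m:ℝ) ^ (m+1)) ≤ (1 + 1/(m:ℝ))^(m+1) * (m:ℝ)^(m+1) :=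
              mul_le_mul_of_nonneg_right h6 (by positivity)
          _ = ((m:ℝ)+1)^(m+1) := h7
      have hcast : ((m+1).factorial : ℝ) = ((m:ℝ)+1) * (m.factorial : ℝ) := by
        rw [Nat.factorial_succ]; push_cast; ring
      have hexp : Real.exp (-((m:ℝ)+1)) = Real.exp (-(m:ℝ)) * Real.exp (-1) := by
        rw [← Real.exp_add]; ring_nf
      have hE : Real.exp 1 * Real.exp (-1) = 1 := by
        rw [← Real.exp_add]; norm_num
      have step1 : ((m+1).factorial : ℝ) ≤ ((m:ℝ)+1) * (Real.exp 1 * m * (m:ℝ)^m * Real.exp (-(m:ℝ))) := by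
        rw [hcast]
        exact mul_le_mul_of_nonneg_left ihm (by positivity)
      have hmm : Real.exp 1 * (m:ℝ) * (m:ℝ)^m = Real.exp 1 * ((m:ℝ)^(m+1)) := by ring
      have step2 : ((m:ℝ)+1) * (Real.exp 1 * m * (m:ℝ)^m * Real.exp (-(m:ℝ)))
          ≤ ((m:ℝ)+1) * (((m:ℝ)+1)^(m+1) * Real.exp (-(m:ℝ))) := by
        apply mul_le_mul_of_nonneg_left _ (by positivity)
        apply mul_le_mul_of_nonneg_right _ (le_of_lt (Real.exp_pos _))
        rw [hmm]; exact key
      have goal_eq : Real.exp 1 * ((m:ℕ)+1 : ℝ) * ((m:ℝ)+1)^(m+1) * Real.exp (-(((m:ℝ))+1))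
          = ((m:ℝ)+1) * (((m:ℝ)+1)^(m+1) * Real.exp (-(m:ℝ))) := by
        rw [hexp]
        have hq : Real.exp 1 * ((m:ℝ)+1) * ((m:ℝ)+1)^(m+1) * (Real.exp (-(m:ℝ)) * Real.exp (-1))
            = (Real.exp 1 * Real.exp (-1)) * (((m:ℝ)+1) * (((m:ℝ)+1)^(m+1) * Real.exp (-(m:ℝ)))) := by ring
        rw [hq, hE, one_mul]
      calc ((m+1).factorial : ℝ) ≤ ((m:ℝ)+1) * (((m:ℝ)+1)^(m+1) * Real.exp (-(m:ℝ))) :=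
            step1.trans step2
        _ = Real.exp 1 * ((m+1):ℕ) * ((m+1:ℕ):ℝ) ^ (m+1) * Real.exp (-((m+1:ℕ):ℝ)) := by
            push_cast
            rw [← goal_eq]

lemma exists_pow (s : ℝ) (hs : 0 ≤ s) :
    ∃ k : ℕ, (k.factorial : ℝ) * Real.exp s ≤ Real.exp 3 * (1 + s) * s ^ k := by
  by_cases h1 : s ≤ 1
  · refine ⟨0, ?_⟩
    simp only [Nat.factorial_zero, Nat.cast_one, one_mul, pow_zero, mul_one]
    calc Real.exp s ≤ Real.exp 3 := Real.exp_le_exp.mpr (by linarith)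
      _ ≤ Real.exp 3 * (1 + s) := le_mul_of_one_le_right (le_of_lt (Real.exp_pos _)) (by linarith)
  · push_neg at h1
    set k : ℕ := ⌈s⌉₊ with hk
    have hks : s ≤ (k:ℝ) := Nat.le_ceil s
    have hk1 : (k:ℝ) < s + 1 := Nat.ceil_lt_add_one hs
    have hkge : 1 ≤ k := by
      rw [hk, Nat.one_le_ceil_iff]; linarith
    have hspos : (0:ℝ) < s := by linarith
    have hkpos : (0:ℝ) < (k:ℝ) := by exact_mod_cast Nat.lt_of_lt_of_le Nat.zero_lt_one hkge
    refine ⟨k, ?_⟩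
    have hf := fact_le k hkge
    have hds : (k:ℝ)/s ≤ 1 + 1/s := by
      rw [div_le_iff₀ hspos]
      field_simp
      linarith
    have h2 : (1 + 1/s) ≤ Real.exp (1/s) := by
      have := Real.add_one_le_exp (1/s); linarith
    have h3 : ((k:ℝ)/s)^k ≤ Real.exp (1/s) ^ k :=
      pow_le_pow_left₀ (by positivity) (hds.trans h2) k
    have h4 : Real.exp (1/s) ^ k = Real.exp ((k:ℝ)/s) := by
      rw [← Real.exp_nat_mul]; congr 1; ring
    have h5 : ((k:ℝ)/s) ≤ 2 := by
      rw [div_le_iff₀ hspos]; nlinarith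
    have h6 : ((k:ℝ)/s)^k ≤ Real.exp 2 :=
      (h4 ▸ h3).trans (Real.exp_le_exp.mpr h5)
    have h7 : (k:ℝ)^k ≤ Real.exp 2 * s^k := by
      have := mul_le_mul_of_nonneg_right h6 (le_of_lt (pow_pos hspos k))
      rwa [div_pow, div_mul_cancel₀] at this
      exact ne_of_gt (pow_pos hspos k)
    have h8 : Real.exp (-(k:ℝ)) * Real.exp s ≤ 1 := by
      rw [← Real.exp_add, show -(k:ℝ) + s = s - k by ring]
      exact Real.exp_le_one_iff.mpr (by linarith)
    have h9 : Real.exp 1 * Real.exp 2 = Real.exp 3 := by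
      rw [← Real.exp_add]; norm_num
    calc (k.factorial : ℝ) * Real.exp s
        ≤ (Real.exp 1 * k * (k:ℝ)^k * Real.exp (-(k:ℝ))) * Real.exp s :=
          mul_le_mul_of_nonneg_right hf (le_of_lt (Real.exp_pos _))
      _ = (Real.exp 1 * k * (k:ℝ)^k) * (Real.exp (-(k:ℝ)) * Real.exp s) := by ring
      _ ≤ (Real.exp 1 * k * (k:ℝ)^k) * 1 := by
          apply mul_le_mul_of_nonneg_left h8
          positivity
      _ = Real.exp 1 * k * (k:ℝ)^k := mul_one _
      _ ≤ Real.exp 1 * (1+s) * (Real.exp 2 * s^k) := by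
          apply mul_le_mul
          · exact mul_le_mul_of_nonneg_left (by linarith) (le_of_lt (Real.exp_pos _))
          · exact h7
          · positivity
          · positivity
      _ = Real.exp 3 * (1 + s) * s ^ k := by rw [← h9]; ring

/-- Easy direction pointwise inequality. -/
lemma keyB {g : En n → ℝ} (hg : IsA g) (x : En n) (β : Fin n → ℕ) :
    (∏ j, |x j| ^ (β j)) * Real.exp (starC (expComp g) (WithLp.toLp 2 (fun j => (β j : ℝ)))) /
      (∏ j, Nat.factorial (β j) : ℝ) ≤ Real.exp (starC g x) := by
  set P : ℝ := ∏ j, |x j| ^ (β j) with hP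
  set B : ℝ := (∏ j, Nat.factorial (β j) : ℝ) with hB
  have hBpos : 0 < B := by
    rw [hB]; positivity
  have hPnn : 0 ≤ P := by rw [hP]; positivity
  by_cases hP0 : P = 0
  · rw [hP0]
    simp only [zero_mul, zero_div]
    exact le_of_lt (Real.exp_pos _)
  · have hPpos : 0 < P := lt_of_le_of_ne hPnn (Ne.symm hP0)
    set D : ℝ := Real.exp (starC g x) * B / P with hD
    have hDpos : 0 < D := by rw [hD]; positivity
    have hstar : starC (expComp g) (WithLp.toLp 2 (fun j => (β j : ℝ))) ≤ Real.log D := by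
      apply psi_star_le
      intro η
      rw [Real.le_log_iff_exp_le hDpos]
      set s : Fin n → ℝ := fun j => |x j| * Real.exp (η j) with hs
      have hsnn : ∀ j, 0 ≤ s j := fun j => by rw [hs]; positivity
      have hprod : P * Real.exp (∑ j, (β j : ℝ) * η j) = ∏ j, (s j) ^ (β j) := by
        rw [Real.exp_sum, hP, ← Finset.prod_mul_distrib]
        refine Finset.prod_congr rfl fun j _ => ?_
        rw [hs, mul_pow, ← Real.exp_nat_mul]
      have hle : ∏ j, (s j) ^ (β j) ≤ B * Real.exp (∑ j, s j) := by
        calc ∏ j, (s j) ^ (β j) ≤ ∏ j, ((β j).factorial : ℝ) * Real.exp (s j) := by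
              refine Finset.prod_le_prod (fun j _ => by positivity) fun j _ =>
                pow_le_fact_exp (s j) (hsnn j) (β j)
          _ = B * Real.exp (∑ j, s j) := by
              rw [Finset.prod_mul_distrib, Real.exp_sum, hB]
      have hstar2 : ∑ j, s j - g (WithLp.toLp 2 (fun j => Real.exp (η j))) ≤ starC g x := by
        have := star_abs_ge hg x (WithLp.toLp 2 (fun j => Real.exp (η j)) : En n) (fun j => le_of_lt (Real.exp_pos _))
        simpa [hs] using this
      have hmain : P * Real.exp (∑ j, (β j : ℝ) * η j - g (WithLp.toLp 2 (fun j => Real.exp (η j))))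
          ≤ Real.exp (starC g x) * B := by
        rw [Real.exp_sub, ← mul_div_assoc, hprod]
        rw [div_le_iff₀ (Real.exp_pos _)]
        calc ∏ j, (s j) ^ (β j) ≤ B * Real.exp (∑ j, s j) := hle
          _ = B * Real.exp (∑ j, s j - g (WithLp.toLp 2 (fun j => Real.exp (η j)))) * Real.exp (g (WithLp.toLp 2 (fun j => Real.exp (η j)))) := by
              rw [Real.exp_sub]
              field_simp
          _ ≤ B * Real.exp (starC g x) * Real.exp (g (WithLp.toLp 2 (fun j => Real.exp (η j)))) := by
              apply mul_le_mul_of_nonneg_right _ (le_of_lt (Real.exp_pos _))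
              exact mul_le_mul_of_nonneg_left (Real.exp_le_exp.mpr hstar2) (le_of_lt hBpos)
          _ = Real.exp (starC g x) * B * Real.exp (g (WithLp.toLp 2 (fun j => Real.exp (η j)))) := by ring
      rw [hD, le_div_iff₀ hPpos]
      linarith [hmain]
    have hEle : Real.exp (starC (expComp g) (WithLp.toLp 2 (fun j => (β j : ℝ)))) ≤ D :=
      (Real.exp_le_exp.mpr hstar).trans_eq (Real.exp_log hDpos)
    calc P * Real.exp (starC (expComp g) (WithLp.toLp 2 (fun j => (β j : ℝ)))) / B
        ≤ P * D / B := by gcongr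
      _ = Real.exp (starC g x) := by
          rw [hD]; field_simp
  
lemma near_sup {g : En n → ℝ} (y : En n) :
    ∃ ξ : En n, starC g y - 1 ≤ ∑ j, y j * ξ j - g ξ := by
  have h : starC g y - 1 < ⨆ ξ : En n, (∑ j, y j * ξ j - g ξ) := by
    have : starC g y - 1 < starC g y := by linarith
    exact this
  obtain ⟨ξ, hξ⟩ := exists_lt_of_lt_ciSup h
  exact ⟨ξ, le_of_lt hξ⟩

lemma near_sup_abs {g : En n → ℝ} (hg : IsA g) (x : En n) :
    ∃ ξ : En n, (∀ j, 0 ≤ ξ j) ∧ starC g x - 1 ≤ ∑ j, |x j| * ξ j - g ξ := by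
  obtain ⟨ξ', hξ'⟩ := near_sup (g := g) x
  refine ⟨(WithLp.toLp 2 (fun j => |ξ' j|) : En n), fun j => abs_nonneg _, ?_⟩
  have h1 : ∑ j, x j * ξ' j ≤ ∑ j, |x j| * |ξ' j| := by
    refine Finset.sum_le_sum fun j _ => ?_
    calc x j * ξ' j ≤ |x j * ξ' j| := le_abs_self _
      _ = |x j| * |ξ' j| := abs_mul _ _
  have h2 : g (WithLp.toLp 2 (fun j => |ξ' j|) : En n) = g ξ' := (hg.2.1 ξ').symm
  rw [h2]
  linarith

/-- From condition (i₃): conjugates satisfy `φ₃*(x) + n log(1+‖x‖) ≤ φ₂*(x) + CL`. -/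
lemma L1 {g2 g3 : En n → ℝ} (hg2 : IsA g2) (a : ℝ)
    (h23 : ∀ x : En n, g2 ((2:ℝ) • x) ≤ g3 x + a) :
    ∃ CL : ℝ, ∀ x : En n, starC g3 x + n * Real.log (1 + ‖x‖) ≤ starC g2 x + CL := by
  obtain ⟨M, hM⟩ := star_lin hg2 (2*n) (by positivity)
  obtain ⟨Cb, _, hCb⟩ := coercive hg2 0
  refine ⟨a + M + 2 + Cb, fun x => ?_⟩
  have hstep1 : starC g3 x ≤ starC g2 ((1/2 : ℝ) • x) + a := by
    have h : ∀ ξ : En n, ∑ j, x j * ξ j - g3 ξ ≤ starC g2 ((1/2 : ℝ) • x) + a := by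
      intro ξ
      have h1 := star_ge hg2 ((1/2 : ℝ) • x) ((2:ℝ) • ξ)
      have h2 : ∑ j, ((1/2 : ℝ) • x) j * ((2:ℝ) • ξ) j = ∑ j, x j * ξ j := by
        refine Finset.sum_congr rfl fun j _ => ?_
        simp only [PiLp.smul_apply, smul_eq_mul]
        ring
      rw [h2] at h1
      have h3 := h23 ξ
      linarith
    exact star_le h
  -- step b
  set y : En n := (1/2 : ℝ) • x with hy
  have hyn : ‖y‖ = ‖x‖ / 2 := by
    rw [hy, norm_smul, Real.norm_eq_abs]
    rw [abs_of_nonneg (by norm_num : (0:ℝ) ≤ 1/2)]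
    ring
  obtain ⟨ξ, hξ⟩ := near_sup (g := g2) y
  have hxx : ∑ j, x j * ξ j = 2 * ∑ j, y j * ξ j := by
    rw [Finset.mul_sum]
    refine Finset.sum_congr rfl fun j _ => ?_
    simp only [hy, PiLp.smul_apply, smul_eq_mul]
    ring
  have hS2x : 2 * (starC g2 y - 1) - Cb ≤ starC g2 x := by
    have h4 := star_ge hg2 x ξ
    have h5 := hCb ξ
    rw [hxx] at h4
    -- y•ξ = (y•ξ - g2 ξ) + g2 ξ ≥ (S'-1) + (-Cb)
    linarith
  have hlin : 2 * (n:ℝ) * ‖y‖ - M ≤ starC g2 y := hM y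
  have hlogle : Real.log (1 + ‖x‖) ≤ ‖x‖ := by
    have := Real.log_le_sub_one_of_pos (show (0:ℝ) < 1 + ‖x‖ by positivity)
    linarith
  have hlog2 : (n:ℝ) * Real.log (1 + ‖x‖) ≤ (n:ℝ) * ‖x‖ :=
    mul_le_mul_of_nonneg_left hlogle (Nat.cast_nonneg _)
  have hns : (n:ℝ) * ‖x‖ = 2 * (n:ℝ) * ‖y‖ := by rw [hyn]; ring
  -- starC g2 x ≥ 2 S' - 2 - Cb ≥ S' + n log(1+‖x‖) - M - 2 - Cb
  have : starC g2 y + (n:ℝ) * Real.log (1 + ‖x‖) - M - 2 - Cb ≤ starC g2 x := by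
    nlinarith [hS2x, hlin, hlog2, hns]
  linarith [hstep1]

/-- Hard direction pointwise inequality. -/
lemma keyC (φ : ℕ → En n → ℝ) (hA : ∀ ν, IsA (φ ν))
    (hi0 : ∀ ν : ℕ, ∀ A > (0:ℝ), ∃ C > (0:ℝ), ∀ x : En n,
      φ ν x + A * Real.log (1 + ‖x‖) ≤ φ (ν+1) x + C)
    (hi2 : ∀ ν : ℕ, ∃ K > (0:ℝ), ∀ x ξ : En n, (∀ j, 0 ≤ x j) → (∀ j, ξ j ∈ Set.Icc (0:ℝ) 1) →
      φ ν (x + ξ) ≤ φ (ν+1) x + K)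
    (hi3 : ∀ ν : ℕ, ∃ a > (0:ℝ), ∀ x : En n, φ ν ((2:ℝ) • x) ≤ φ (ν+1) x + a)
    (ν : ℕ) :
    ∃ C > (0:ℝ), ∀ x : En n, ∃ β : Fin n → ℕ,
      Real.exp (starC (φ (ν+3)) x) ≤
        C * ((∏ j, |x j| ^ (β j)) * Real.exp (starC (expComp (φ ν)) (WithLp.toLp 2 (fun j => (β j : ℝ)))) /
          (∏ j, Nat.factorial (β j) : ℝ)) := by
  obtain ⟨K, hKpos, hK⟩ := hi2 ν
  obtain ⟨C₀, hC₀pos, hC₀⟩ := hi0 (ν+1) (n+1) (by positivity)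
  obtain ⟨a, hapos, ha⟩ := hi3 (ν+2)
  obtain ⟨CL, hCL⟩ := L1 (hA (ν+2)) a ha
  set Lc : ℝ := CL + 1 + C₀ + K + 3 * n with hLc
  refine ⟨Real.exp Lc, Real.exp_pos _, fun x => ?_⟩
  -- near maximizer for φ(ν+2) at x
  obtain ⟨ξ0, hξ0nn, hξ0⟩ := near_sup_abs (hA (ν+2)) x
  set e1 : En n := WithLp.toLp 2 (fun _ => (1:ℝ)) with he1
  set ξ1 : En n := ξ0 + e1 with hξ1
  have hξ1app : ∀ j, ξ1 j = ξ0 j + 1 := fun j => rfl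
  have hξ1pos : ∀ j, (0:ℝ) < ξ1 j := fun j => by
    rw [hξ1app j]; linarith [hξ0nn j]
  -- t and β
  set t : Fin n → ℝ := fun j => |x j| * ξ1 j with htdef
  have htnn : ∀ j, 0 ≤ t j := fun j => mul_nonneg (abs_nonneg _) (le_of_lt (hξ1pos j))
  set β : Fin n → ℕ := fun j => (exists_pow (t j) (htnn j)).choose with hβ
  have hβspec : ∀ j, ((β j).factorial : ℝ) * Real.exp (t j) ≤ Real.exp 3 * (1 + t j) * (t j) ^ (β j) :=
    fun j => (exists_pow (t j) (htnn j)).choose_spec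
  refine ⟨β, ?_⟩
  set η : En n := WithLp.toLp 2 (fun j => Real.log (ξ1 j)) with hη
  have hexpη : (WithLp.toLp 2 (fun j => Real.exp (η j))) = ξ1 := by
    ext j
    exact Real.exp_log (hξ1pos j)
  -- lower bound for starC ψ
  have hQ : ∑ j, (β j : ℝ) * η j - φ ν ξ1 ≤ starC (expComp (φ ν)) (WithLp.toLp 2 (fun j => (β j : ℝ))) := by
    have := psi_star_ge (hA ν) β η
    rwa [show φ ν (WithLp.toLp 2 (fun j => Real.exp (η j))) = φ ν ξ1 by rw [hexpη]] at this
  set P : ℝ := ∏ j, |x j| ^ (β j) with hP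
  set B : ℝ := (∏ j, Nat.factorial (β j) : ℝ) with hB
  set W : ℝ := Real.exp (∑ j, (β j : ℝ) * η j) with hW
  have hBpos : (0:ℝ) < B := by rw [hB]; positivity
  have hPnn : (0:ℝ) ≤ P := by rw [hP]; positivity
  have hWpos : (0:ℝ) < W := Real.exp_pos _
  -- product identities
  have hPt : ∏ j, (t j) ^ (β j) = P * W := by
    rw [hP, hW, Real.exp_sum, ← Finset.prod_mul_distrib]
    refine Finset.prod_congr rfl fun j _ => ?_
    rw [htdef]
    dsimp only
    rw [mul_pow]
    congr 1
    rw [Real.exp_nat_mul, hη]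
    dsimp only
    rw [Real.exp_log (hξ1pos j)]
  have hprodineq : B * Real.exp (∑ j, t j) ≤ Real.exp 3 ^ n * (∏ j, (1 + t j)) * (P * W) := by
    calc B * Real.exp (∑ j, t j) = ∏ j, (((β j).factorial : ℝ) * Real.exp (t j)) := by
          rw [Finset.prod_mul_distrib, Real.exp_sum, hB]
      _ ≤ ∏ j, (Real.exp 3 * (1 + t j) * (t j) ^ (β j)) := by
          refine Finset.prod_le_prod (fun j _ => by positivity) fun j _ => hβspec j
      _ = Real.exp 3 ^ n * (∏ j, (1 + t j)) * (P * W) := by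
          rw [Finset.prod_mul_distrib, Finset.prod_mul_distrib, Finset.prod_const,
            Finset.card_univ, Fintype.card_fin, hPt]
  -- log bound on ∏ (1+t j)
  have hlogt : ∑ j, Real.log (1 + t j) ≤
      n * Real.log (1 + ‖x‖) + n * Real.log (1 + ‖ξ0‖) := by
    have hj : ∀ j, Real.log (1 + t j) ≤ Real.log (1 + ‖x‖) + Real.log (1 + ‖ξ0‖) := by
      intro j
      have hb1 : |x j| ≤ ‖x‖ := coord_le x j
      have hb2 : ξ0 j ≤ ‖ξ0‖ := (le_abs_self _).trans (coord_le ξ0 j)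
      have hble : 1 + t j ≤ (1 + ‖x‖) * (1 + ‖ξ0‖) := by
        rw [htdef]
        dsimp only
        rw [hξ1app j]
        nlinarith [abs_nonneg (x j), hξ0nn j, norm_nonneg x, norm_nonneg ξ0]
      calc Real.log (1 + t j) ≤ Real.log ((1 + ‖x‖) * (1 + ‖ξ0‖)) := by
            apply Real.log_le_log (by linarith [htnn j] : (0:ℝ) < 1 + t j) hble
        _ = Real.log (1 + ‖x‖) + Real.log (1 + ‖ξ0‖) := by
            rw [Real.log_mul (by positivity) (by positivity)]
      
    calc ∑ j, Real.log (1 + t j) ≤ ∑ _j : Fin n, (Real.log (1 + ‖x‖) + Real.log (1 + ‖ξ0‖)) :=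
          Finset.sum_le_sum fun j _ => hj j
      _ = n * Real.log (1 + ‖x‖) + n * Real.log (1 + ‖ξ0‖) := by
          rw [Finset.sum_const, Finset.card_univ, Fintype.card_fin]
          push_cast
          ring
  -- inequalities between φ levels at ξ0/ξ1
  have hg0 : φ ν ξ1 ≤ φ (ν+1) ξ0 + K := by
    apply hK ξ0 e1 hξ0nn
    intro j
    constructor <;> norm_num [he1]
  have hg1 : φ (ν+1) ξ0 + ((n:ℝ)+1) * Real.log (1 + ‖ξ0‖) ≤ φ (ν+2) ξ0 + C₀ := by
    have := hC₀ ξ0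
    push_cast at this ⊢
    linarith
  have hlogξ0 : 0 ≤ Real.log (1 + ‖ξ0‖) := Real.log_nonneg (by linarith [norm_nonneg ξ0])
  have hsumtt : ∑ j, |x j| * ξ0 j ≤ ∑ j, t j := by
    refine Finset.sum_le_sum fun j _ => ?_
    rw [htdef]
    dsimp only
    rw [hξ1app j]
    nlinarith [abs_nonneg (x j)]
  -- core scalar inequality
  have hcore : starC (φ (ν+3)) x + φ ν ξ1 + 3*(n:ℝ) + ∑ j, Real.log (1 + t j)
      ≤ Lc + ∑ j, t j := by
    have h1 := hCL x
    have h2 := hξ0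
    rw [hLc]
    linarith
  -- multiplicative assembly
  set S3 : ℝ := starC (φ (ν+3)) x with hS3
  set Sψ : ℝ := starC (expComp (φ ν)) (WithLp.toLp 2 (fun j => (β j : ℝ))) with hSψ
  set F : ℝ := Real.exp (φ ν ξ1 + ∑ j, t j) with hF
  have hFpos : (0:ℝ) < F := Real.exp_pos _
  have hEψ : W ≤ Real.exp Sψ * Real.exp (φ ν ξ1) := by
    have h3 : ∑ j, (β j : ℝ) * η j ≤ Sψ + φ ν ξ1 := by linarith [hQ]
    calc W ≤ Real.exp (Sψ + φ ν ξ1) := Real.exp_le_exp.mpr h3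
      _ = Real.exp Sψ * Real.exp (φ ν ξ1) := Real.exp_add _ _
  have hmulmain : Real.exp S3 * B * F ≤ Real.exp Lc * (P * Real.exp Sψ) * F := by
    have hprodlog : (∏ j, (1 + t j)) = Real.exp (∑ j, Real.log (1 + t j)) := by
      rw [Real.exp_sum]
      refine Finset.prod_congr rfl fun j _ => ?_
      rw [Real.exp_log (by linarith [htnn j] : (0:ℝ) < 1 + t j)]
    have hexp3n : Real.exp 3 ^ n = Real.exp (3 * (n:ℝ)) := by
      rw [show (3:ℝ) * (n:ℝ) = (n:ℕ) * (3:ℝ) by push_cast; ring, Real.exp_nat_mul]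
    calc Real.exp S3 * B * F
        = Real.exp (S3 + φ ν ξ1) * (B * Real.exp (∑ j, t j)) := by
          rw [hF, Real.exp_add, Real.exp_add]; ring
      _ ≤ Real.exp (S3 + φ ν ξ1) * (Real.exp 3 ^ n * (∏ j, (1 + t j)) * (P * W)) := by
          exact mul_le_mul_of_nonneg_left hprodineq (le_of_lt (Real.exp_pos _))
      _ = Real.exp (S3 + φ ν ξ1 + 3*(n:ℝ) + ∑ j, Real.log (1 + t j)) * (P * W) := by
          rw [hprodlog, hexp3n]
          simp only [Real.exp_add]
          ring
      _ ≤ Real.exp (Lc + ∑ j, t j) * (P * W) := by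
          apply mul_le_mul_of_nonneg_right (Real.exp_le_exp.mpr hcore)
          positivity
      _ ≤ Real.exp (Lc + ∑ j, t j) * (P * (Real.exp Sψ * Real.exp (φ ν ξ1))) := by
          apply mul_le_mul_of_nonneg_left _ (le_of_lt (Real.exp_pos _))
          exact mul_le_mul_of_nonneg_left hEψ hPnn
      _ = Real.exp Lc * (P * Real.exp Sψ) * F := by
          rw [hF]
          simp only [Real.exp_add]
          ring
  have hfinal : Real.exp S3 * B ≤ Real.exp Lc * (P * Real.exp Sψ) :=
    le_of_mul_le_mul_right hmulmain hFpos
  have hgoal : Real.exp S3 ≤ Real.exp Lc * (P * Real.exp Sψ) / B := by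
    rw [div_eq_mul_inv]
    rw [← mul_le_mul_iff_of_pos_right hBpos]
    calc Real.exp S3 * B ≤ Real.exp Lc * (P * Real.exp Sψ) := hfinal
      _ = Real.exp Lc * (P * Real.exp Sψ) * B⁻¹ * B := by
          field_simp
  calc Real.exp S3 ≤ Real.exp Lc * (P * Real.exp Sψ) / B := hgoal
    _ = Real.exp Lc * (P * Real.exp Sψ / B) := by ring

end Stmt3Aux

theorem stmt3 (n : ℕ) (φ : ℕ → En n → ℝ)
    (hA : ∀ ν, IsA (φ ν))
    (hconv : ∀ ν, ConvexOn ℝ Set.univ (φ ν))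
    (hi0 : ∀ ν : ℕ, ∀ A > (0:ℝ), ∃ C > (0:ℝ), ∀ x : En n,
      φ ν x + A * Real.log (1 + ‖x‖) ≤ φ (ν+1) x + C)
    (hi2 : ∀ ν : ℕ, ∃ K > (0:ℝ), ∀ x ξ : En n, (∀ j, 0 ≤ x j) → (∀ j, ξ j ∈ Set.Icc (0:ℝ) 1) →
      φ ν (x + ξ) ≤ φ (ν+1) x + K)
    (hi3 : ∀ ν : ℕ, ∃ a > (0:ℝ), ∀ x : En n, φ ν ((2:ℝ) • x) ≤ φ (ν+1) x + a) :
    {f : En n → ℂ | ∃ ν, memG (expComp (φ ν)) f} = {f : En n → ℂ | ∃ ν, memGS (φ ν) f} := by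
  ext f
  simp only [Set.mem_setOf_eq]
  constructor
  · rintro ⟨ν, hsm, hb⟩
    refine ⟨ν + 3, hsm, fun m => ?_⟩
    obtain ⟨M, hM⟩ := hb m
    obtain ⟨C, hCpos, hkey⟩ := Stmt3Aux.keyC φ hA hi0 hi2 hi3 ν
    refine ⟨C * M, ?_⟩
    rintro v ⟨⟨⟨x, α⟩, hα⟩, rfl⟩
    obtain ⟨β, hβ⟩ := hkey x
    have hgw : gWeight (expComp (φ ν)) f x α β ≤ M :=
      hM ⟨⟨(x, α, β), hα⟩, rfl⟩
    have habs : (0:ℝ) ≤ ‖Dm α f x‖ := norm_nonneg _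
    have h1 : gsWeight (φ (ν+3)) f x α ≤ C * gWeight (expComp (φ ν)) f x α β := by
      unfold gsWeight gWeight
      calc ‖Dm α f x‖ * Real.exp (starC (φ (ν+3)) x)
          ≤ ‖Dm α f x‖ *
            (C * ((∏ j, |x j| ^ (β j)) * Real.exp (starC (expComp (φ ν)) (WithLp.toLp 2 (fun j => (β j : ℝ)))) /
              (∏ j, Nat.factorial (β j) : ℝ))) := mul_le_mul_of_nonneg_left hβ habs
        _ = C * ((∏ j, |x j| ^ (β j)) * ‖Dm α f x‖ *
              Real.exp (starC (expComp (φ ν)) (WithLp.toLp 2 (fun j => (β j : ℝ)))) /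
              (∏ j, Nat.factorial (β j) : ℝ)) := by ring
    dsimp only
    calc gsWeight (φ (ν+3)) f x α ≤ C * gWeight (expComp (φ ν)) f x α β := h1
      _ ≤ C * M := mul_le_mul_of_nonneg_left hgw (le_of_lt hCpos)
  · rintro ⟨ν, hsm, hb⟩
    refine ⟨ν, hsm, fun m => ?_⟩
    obtain ⟨M, hM⟩ := hb m
    refine ⟨M, ?_⟩
    rintro v ⟨⟨⟨x, α, β⟩, hα⟩, rfl⟩
    have hgs : gsWeight (φ ν) f x α ≤ M := hM ⟨⟨(x, α), hα⟩, rfl⟩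
    have habs : (0:ℝ) ≤ ‖Dm α f x‖ := norm_nonneg _
    have hkb := Stmt3Aux.keyB (hA ν) x β
    have h1 : gWeight (expComp (φ ν)) f x α β ≤ gsWeight (φ ν) f x α := by
      unfold gWeight gsWeight
      calc (∏ j, |x j| ^ (β j)) * ‖Dm α f x‖ *
            Real.exp (starC (expComp (φ ν)) (WithLp.toLp 2 (fun j => (β j : ℝ)))) /
            (∏ j, Nat.factorial (β j) : ℝ)
          = ‖Dm α f x‖ *
            ((∏ j, |x j| ^ (β j)) * Real.exp (starC (expComp (φ ν)) (WithLp.toLp 2 (fun j => (β j : ℝ)))) /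
              (∏ j, Nat.factorial (β j) : ℝ)) := by ring
        _ ≤ ‖Dm α f x‖ * Real.exp (starC (φ ν) x) :=
            mul_le_mul_of_nonneg_left hkb habs
    dsimp only
    exact h1.trans hgs
end
end

section
/- Let Φ = {φ_ν}_{ν=1}^∞ be a sequence of functions in 𝒜(ℝⁿ) satisfying condition (i₀): for each ν ∈ ℕ and each A > 0 there exists C_{ν,A} > 0 such that φ_ν(x) + A·ln(1+‖x‖) ≤ φ_{ν+1}(x) + C_{ν,A} for all x ∈ ℝⁿ, and condition (i₂): for each ν there exists K_ν > 0 with φ_ν(x+ξ) ≤ φ_{ν+1}(x) + K_ν for all x ∈ [0,∞)ⁿ and ξ ∈ [0,1]ⁿ. Assume moreover that every function ψ_ν = φ_ν[e] is convex on ℝⁿ. Then E(Φ) = ∪_ν E(φ_ν) and ℋ(Φ) = ∪_ν ℋ(φ_ν) coincide as sets of entire functions. -/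
open MeasureTheory Filter
open scoped BigOperators Topology

noncomputable section

/-- Young–Fenchel conjugate with values in the extended reals. -/
def econj {n : ℕ} (g : En n → EReal) (x : En n) : EReal :=
  ⨆ y : En n, (((∑ j, x j * y j : ℝ) : EReal) - g y)

/-- The second Young–Fenchel conjugate `(ψ*)*` of a real-valued function `ψ`. -/
def ddconj {n : ℕ} (ψ : En n → ℝ) : En n → EReal :=
  econj (econj (fun y => ((ψ y : ℝ) : EReal)))

/-- The weight `|f(z)|(1+‖z‖)^m e^{-(ψ*)*(ln(1+|Im z₁|),…,ln(1+|Im zₙ|))}` with `ψ = φ[e]`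
(the value of `(ψ*)*` at the relevant points being finite, `EReal.toReal` returns it). -/
def sigWeight {n : ℕ} (φ : En n → ℝ) (m : ℕ) (f : Cn n → ℂ) (z : Cn n) : ℝ :=
  ‖f z‖ * (1 + ‖z‖) ^ m *
    Real.exp (-(ddconj (expComp φ) (WithLp.toLp 2 (fun j => Real.log (1 + |(z j).im|)))).toReal)

def memH {n : ℕ} (φ : En n → ℝ) (f : Cn n → ℂ) : Prop :=
  Differentiable ℂ f ∧ ∀ m : ℕ, BddAbove (Set.range (sigWeight φ m f))

lemma exists_subgrad_main {n : ℕ} (ψ : En n → ℝ) (hc : Continuous ψ)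
    (hconv : ConvexOn ℝ Set.univ ψ) (x : En n) :
    ∃ y : En n, ∀ z : En n, (∑ j, y j * z j) - ψ z ≤ (∑ j, y j * x j) - ψ x := by
  classical
  set S : Set (En n × ℝ) := {p | ψ p.1 < p.2} with hS
  have hSopen : IsOpen S := isOpen_lt (hc.comp continuous_fst) continuous_snd
  have hSconv : Convex ℝ S := by
    intro p hp q hq a b ha hb hab
    simp only [hS, Set.mem_setOf_eq] at hp hq ⊢
    have h1 : ψ (a • p.1 + b • q.1) ≤ a * ψ p.1 + b * ψ q.1 :=
      hconv.2 (Set.mem_univ _) (Set.mem_univ _) ha hb hab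
    have h2 : (a • p + b • q).1 = a • p.1 + b • q.1 := rfl
    have h3 : (a • p + b • q).2 = a * p.2 + b * q.2 := rfl
    rw [h2, h3]
    rcases ha.eq_or_lt with h | h
    · have hb1 : b = 1 := by linarith
      subst hb1; simp [← h] at h1 ⊢; linarith
    · have hp' : a * ψ p.1 < a * p.2 := mul_lt_mul_of_pos_left hp h
      have hq' : b * ψ q.1 ≤ b * q.2 := mul_le_mul_of_nonneg_left hq.le hb
      linarith
  have hxnot : (x, ψ x) ∉ S := by simp [hS]
  obtain ⟨f, hf⟩ := geometric_hahn_banach_point_open hSconv hSopen hxnot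
  set c : ℝ := f (0, 1) with hcdef
  have hshift : ∀ (z : En n) (t ε : ℝ), f (z, t + ε) = f (z, t) + ε * c := by
    intro z t ε
    have : ((z, t + ε) : En n × ℝ) = (z, t) + ε • (0, 1) := by
      simp [Prod.ext_iff, smul_eq_mul, mul_comm]
    rw [this, map_add, _root_.map_smul, smul_eq_mul]
  have hcpos : 0 < c := by
    have h1 : f (x, ψ x) < f (x, ψ x + 1) := hf _ (by simp [hS])
    rw [hshift x (ψ x) 1] at h1; linarith
  have hkey : ∀ z : En n, f (x, ψ x) ≤ f (z, ψ z) := by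
    intro z
    by_contra h
    push_neg at h
    set ε : ℝ := (f (x, ψ x) - f (z, ψ z)) / c with hε
    have hεpos : 0 < ε := div_pos (by linarith) hcpos
    have h2 := hf (z, ψ z + ε) (by simp [hS, hεpos])
    rw [hshift z (ψ z) ε, hε, div_mul_cancel₀ _ hcpos.ne'] at h2
    linarith
  have hlin : ∀ z : En n, f (z, 0) = ∑ j, z j * f (EuclideanSpace.single j (1:ℝ), 0) := by
    intro z
    have h1 : ((z, (0:ℝ)) : En n × ℝ) = ∑ j, z j • (EuclideanSpace.single j (1:ℝ), (0:ℝ)) := by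
      rw [Prod.ext_iff]
      constructor
      · rw [Prod.fst_sum]
        simp only [Prod.smul_mk]
        have h2 := (EuclideanSpace.basisFun (Fin n) ℝ).sum_repr z
        simp only [EuclideanSpace.basisFun_apply, EuclideanSpace.basisFun_repr] at h2
        exact h2.symm
      · rw [Prod.snd_sum]
        simp
    rw [h1, map_sum]
    refine Finset.sum_congr rfl fun j _ => ?_
    rw [_root_.map_smul, smul_eq_mul]
  have hdecomp : ∀ (z : En n) (t : ℝ), f (z, t) = f (z, 0) + t * c := by
    intro z t
    have := hshift z 0 t
    simpa using this
  refine ⟨WithLp.toLp 2 (fun j => -(f (EuclideanSpace.single j (1:ℝ), 0)) / c), fun z => ?_⟩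
  have h1 := hkey z
  rw [hdecomp x, hdecomp z, hlin x, hlin z] at h1
  set g : Fin n → ℝ := fun j => f (EuclideanSpace.single j (1:ℝ), 0) with hg
  have hsum : ∀ w : En n, (∑ j, (-(g j) / c) * w j) = (-(∑ j, w j * g j)) / c := by
    intro w
    have h3 : ∀ j, (-(g j) / c) * w j = (-(w j * g j)) / c := fun j => by ring
    rw [Finset.sum_congr rfl fun j _ => h3 j, ← Finset.sum_div, ← Finset.sum_neg_distrib]
  show (∑ j, (-(g j) / c) * z j) - ψ z ≤ (∑ j, (-(g j) / c) * x j) - ψ x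
  rw [hsum z, hsum x]
  have e : ∀ (s t : ℝ), (-s)/c - t = (-s - t*c)/c := fun s t => by field_simp
  rw [e, e]
  exact (div_le_div_iff_of_pos_right hcpos).mpr (by linarith)

lemma ddconj_eq_main {n : ℕ} (ψ : En n → ℝ) (hc : Continuous ψ)
    (hconv : ConvexOn ℝ Set.univ ψ) (x : En n) : ddconj ψ x = ((ψ x : ℝ) : EReal) := by
  apply le_antisymm
  · refine iSup_le fun y => ?_
    have h1 : ((∑ j, y j * x j - ψ x : ℝ) : EReal) ≤ econj (fun z => ((ψ z : ℝ) : EReal)) y := by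
      refine le_iSup_of_le x ?_
      rw [← EReal.coe_sub]
    calc ((∑ j, x j * y j : ℝ) : EReal) - econj (fun z => ((ψ z : ℝ) : EReal)) y
        ≤ ((∑ j, x j * y j : ℝ) : EReal) - ((∑ j, y j * x j - ψ x : ℝ) : EReal) :=
          EReal.sub_le_sub le_rfl h1
      _ = ((ψ x : ℝ) : EReal) := by
          rw [← EReal.coe_sub, EReal.coe_eq_coe_iff]
          have : (∑ j, x j * y j) = ∑ j, y j * x j :=
            Finset.sum_congr rfl fun j _ => mul_comm _ _
          rw [this]; ring
  · obtain ⟨y, hy⟩ := exists_subgrad_main ψ hc hconv x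
    have hF : econj (fun z => ((ψ z : ℝ) : EReal)) y ≤ ((∑ j, y j * x j - ψ x : ℝ) : EReal) := by
      refine iSup_le fun z => ?_
      rw [show (((∑ j, y j * z j : ℝ) : EReal) - ((ψ z : ℝ) : EReal))
          = ((∑ j, y j * z j - ψ z : ℝ) : EReal) from (EReal.coe_sub _ _).symm]
      exact EReal.coe_le_coe_iff.mpr (hy z)
    refine le_trans ?_ (le_iSup _ y)
    calc ((ψ x : ℝ) : EReal)
        = ((∑ j, x j * y j : ℝ) : EReal) - ((∑ j, y j * x j - ψ x : ℝ) : EReal) := by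
          rw [← EReal.coe_sub, EReal.coe_eq_coe_iff]
          have : (∑ j, x j * y j) = ∑ j, y j * x j :=
            Finset.sum_congr rfl fun j _ => mul_comm _ _
          rw [this]; ring
      _ ≤ ((∑ j, x j * y j : ℝ) : EReal) - econj (fun z => ((ψ z : ℝ) : EReal)) y :=
          EReal.sub_le_sub le_rfl hF

lemma expComp_continuous {n : ℕ} (φ : En n → ℝ) (hc : Continuous φ) :
    Continuous (expComp φ) := by
  have h1 : Continuous (fun x : En n => (WithLp.toLp 2 (fun j => Real.exp (x j)) : En n)) :=
    (PiLp.continuous_toLp 2 _).comp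
      (continuous_pi fun j => Real.continuous_exp.comp (PiLp.continuous_apply 2 _ j))
  exact hc.comp h1


theorem stmt4 (n : ℕ) (φ : ℕ → En n → ℝ)
    (hA : ∀ ν, IsA (φ ν))
    (hi0 : ∀ ν : ℕ, ∀ A > (0:ℝ), ∃ C > (0:ℝ), ∀ x : En n,
      φ ν x + A * Real.log (1 + ‖x‖) ≤ φ (ν+1) x + C)
    (hi2 : ∀ ν : ℕ, ∃ K > (0:ℝ), ∀ x ξ : En n, (∀ j, 0 ≤ x j) → (∀ j, ξ j ∈ Set.Icc (0:ℝ) 1) →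
      φ ν (x + ξ) ≤ φ (ν+1) x + K)
    (hψconv : ∀ ν, ConvexOn ℝ Set.univ (expComp (φ ν))) :
    {f : Cn n → ℂ | ∃ ν, memE (φ ν) f} = {f : Cn n → ℂ | ∃ ν, memH (φ ν) f} := by
  ext f
  simp only [Set.mem_setOf_eq]
  have hdd : ∀ (ν : ℕ) (z : Cn n),
      (ddconj (expComp (φ ν)) (WithLp.toLp 2 (fun j => Real.log (1 + |(z j).im|)))).toReal
        = φ ν (WithLp.toLp 2 (fun j => 1 + |(z j).im|)) := by
    intro ν z
    rw [ddconj_eq_main _ (expComp_continuous _ (hA ν).1) (hψconv ν), EReal.toReal_coe]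
    show φ ν (WithLp.toLp 2 (fun j => Real.exp (Real.log (1 + |(z j).im|)))) = _
    congr 1
    ext j
    exact Real.exp_log (by positivity)
  constructor
  · rintro ⟨ν, hdiff, hbdd⟩
    refine ⟨ν, hdiff, fun m => ?_⟩
    obtain ⟨B, hB⟩ := hbdd m
    refine ⟨B, fun r hr => ?_⟩
    obtain ⟨z, rfl⟩ := hr
    obtain ⟨hc, habs, hmono, _⟩ := hA ν
    have h1 : φ ν (imv z) ≤ φ ν (WithLp.toLp 2 (fun j => 1 + |(z j).im|)) := by
      rw [habs (imv z)]
      refine hmono _ _ (fun j => abs_nonneg _) (fun j => ?_)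
      show |(z j).im| ≤ 1 + |(z j).im|
      linarith [abs_nonneg (z j).im]
    have key : sigWeight (φ ν) m f z ≤ pWeight (φ ν) m f z := by
      unfold sigWeight pWeight
      rw [hdd ν z]
      exact mul_le_mul_of_nonneg_left (Real.exp_le_exp.mpr (neg_le_neg h1)) (by positivity)
    exact key.trans (hB ⟨z, rfl⟩)
  · rintro ⟨ν, hdiff, hbdd⟩
    obtain ⟨K, hK, hKle⟩ := hi2 ν
    refine ⟨ν + 1, hdiff, fun m => ?_⟩
    obtain ⟨B, hB⟩ := hbdd m
    refine ⟨B * Real.exp K, fun r hr => ?_⟩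
    obtain ⟨z, rfl⟩ := hr
    have h2 : φ ν (WithLp.toLp 2 (fun j => 1 + |(z j).im|)) ≤ φ (ν + 1) (imv z) + K := by
      have h3 := hKle (WithLp.toLp 2 (fun j => |(z j).im|)) (WithLp.toLp 2 (fun _ => 1)) (fun j => abs_nonneg _)
        (fun j => ⟨zero_le_one, le_refl 1⟩)
      have hxy : ((WithLp.toLp 2 (fun j => |(z j).im|) : En n) + (WithLp.toLp 2 (fun _ => 1) : En n))
          = (WithLp.toLp 2 (fun j => 1 + |(z j).im|) : En n) := by
        ext j
        show |(z j).im| + 1 = 1 + |(z j).im|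
        ring
      rw [hxy] at h3
      have habs1 := (hA (ν + 1)).2.1 (imv z)
      have : φ (ν + 1) (WithLp.toLp 2 (fun j => |(z j).im|) : En n) = φ (ν + 1) (imv z) := by
        rw [habs1]; rfl
      linarith [h3, this.symm.le, this.le]
    have key : pWeight (φ (ν + 1)) m f z ≤ sigWeight (φ ν) m f z * Real.exp K := by
      unfold sigWeight pWeight
      rw [hdd ν z]
      have hexp : Real.exp (-(φ (ν + 1) (imv z)))
          ≤ Real.exp (-(φ ν (WithLp.toLp 2 (fun j => 1 + |(z j).im|)))) * Real.exp K := by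
        rw [← Real.exp_add]
        exact Real.exp_le_exp.mpr (by linarith)
      calc ‖f z‖ * (1 + ‖z‖) ^ m * Real.exp (-(φ (ν + 1) (imv z)))
          ≤ ‖f z‖ * (1 + ‖z‖) ^ m *
            (Real.exp (-(φ ν (WithLp.toLp 2 (fun j => 1 + |(z j).im|)))) * Real.exp K) :=
            mul_le_mul_of_nonneg_left hexp (by positivity)
        _ = ‖f z‖ * (1 + ‖z‖) ^ m *
            Real.exp (-(φ ν (WithLp.toLp 2 (fun j => 1 + |(z j).im|)))) * Real.exp K := by ring
    calc pWeight (φ (ν + 1)) m f z ≤ sigWeight (φ ν) m f z * Real.exp K := key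
      _ ≤ B * Real.exp K := mul_le_mul_of_nonneg_right (hB ⟨z, rfl⟩) (Real.exp_nonneg K)
end
end

section
/- Let g ∈ ℬ([0,∞)ⁿ). Then for each M > 0 there exists a constant A > 0 such that for all x = (x₁,…,xₙ) ∈ [0,∞)ⁿ, (g[e])*(x) ≤ Σ_{1≤j≤n, x_j≠0} (x_j·ln(x_j/M) − x_j) + A. -/
open Filter
open scoped BigOperators Topology

noncomputable section

/-- The closed positive orthant `[0,∞)ⁿ`. -/
def orthant (n : ℕ) : Set (En n) := {x | ∀ j, 0 ≤ x j}

/-- `g ∈ ℬ([0,∞)ⁿ)`: `g` is continuous on the orthant and `g(x)/‖x‖ → +∞`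
as `x → ∞` within the orthant. -/
def memB {n : ℕ} (g : En n → ℝ) : Prop :=
  ContinuousOn g (orthant n) ∧
    Tendsto (fun x : En n => g x / ‖x‖) (cocompact (En n) ⊓ 𝓟 (orthant n)) atTop

/-! Since `g` grows superlinearly on the orthant, `g(t) ≥ M ∑ tⱼ - C` there. Hence
`⟨x, y⟩ - g[e](y) ≤ ∑ⱼ (xⱼ yⱼ - M e^{yⱼ}) + C`, and each summand is at most its supremum over `yⱼ`,
namely `xⱼ ln (xⱼ / M) - xⱼ`, attained at `e^{yⱼ} = xⱼ / M`. -/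

/-- Fenchel–Young for `M e^b`. At `a = 0` the right side is `0` (Lean's `log 0 = 0`), which is why
the sum over `xⱼ ≠ 0` in the theorem may be taken over all `j`. -/
lemma mul_sub_mul_exp_le_mul_log_div_sub {a M : ℝ} (b : ℝ) (ha : 0 ≤ a) (hM : 0 < M) :
    a * b - M * Real.exp b ≤ a * Real.log (a / M) - a := by
  rcases ha.eq_or_lt with rfl | ha
  · simp only [zero_mul, zero_sub, zero_div, Real.log_zero, sub_zero, neg_nonpos]
    positivity
  have hexp := Real.add_one_le_exp (b - Real.log (a / M))
  rw [Real.exp_sub, Real.exp_log (div_pos ha hM)] at hexp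
  have : a * (b - Real.log (a / M) + 1) ≤ M * Real.exp b :=
    calc a * (b - Real.log (a / M) + 1) ≤ a * (Real.exp b / (a / M)) := by gcongr
      _ = M * Real.exp b := by field_simp
  linarith

lemma exists_mul_norm_sub_le_of_tendsto_div_norm {E : Type*} [NormedAddCommGroup E]
    {s : Set E} {g : E → ℝ} (hs : IsClosed s) (hcont : ContinuousOn g s)
    (hgrowth : Tendsto (fun x => g x / ‖x‖) (cocompact E ⊓ 𝓟 s) atTop) (M : ℝ) :
    ∃ C, ∀ t ∈ s, M * ‖t‖ - C ≤ g t := by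
  obtain ⟨K, hK, hfar⟩ := (hasBasis_cocompact.eventually_iff).mp
    (eventually_inf_principal.mp (hgrowth.eventually_gt_atTop (max M 0)))
  obtain ⟨C, hC⟩ := (hK.inter_right hs).bddBelow_image
    (f := fun t => g t - M * ‖t‖) ((hcont.mono Set.inter_subset_right).sub (by fun_prop))
  refine ⟨max (-C) 0, fun t ht => ?_⟩
  by_cases htK : t ∈ K
  · have := hC ⟨t, ⟨htK, ht⟩, rfl⟩
    simp only at this
    linarith [le_max_left (-C) 0]
  · have hgt := hfar htK ht
    have hnorm : 0 < ‖t‖ := (norm_nonneg t).lt_of_ne fun h => by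
      rw [← h, div_zero] at hgt
      exact (le_max_right M 0).not_gt hgt
    rw [lt_div_iff₀ hnorm] at hgt
    nlinarith [le_max_left M 0, le_max_right (-C) 0]

lemma isClosed_orthant (n : ℕ) : IsClosed (orthant n) := by
  simp only [orthant, Set.ofPred_forall]
  exact isClosed_iInter fun j => isClosed_le continuous_const (PiLp.continuous_apply 2 _ j)

lemma sum_le_card_mul_norm {n : ℕ} (t : En n) : ∑ j, t j ≤ n * ‖t‖ :=
  calc ∑ j, t j ≤ ∑ _j : Fin n, ‖t‖ :=
        Finset.sum_le_sum fun j _ => (le_abs_self _).trans (PiLp.norm_apply_le t j)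
    _ = n * ‖t‖ := by simp

lemma memB.exists_mul_sum_sub_le {n : ℕ} {g : En n → ℝ} (hg : memB g) {M : ℝ} (hM : 0 ≤ M) :
    ∃ C, ∀ t ∈ orthant n, M * ∑ j, t j - C ≤ g t := by
  obtain ⟨C, hC⟩ :=
    exists_mul_norm_sub_le_of_tendsto_div_norm (isClosed_orthant n) hg.1 hg.2 (M * n)
  refine ⟨C, fun t ht => le_trans ?_ (hC t ht)⟩
  have := mul_le_mul_of_nonneg_left (sum_le_card_mul_norm t) hM
  linarith

theorem stmt6 (n : ℕ) (g : En n → ℝ) (hg : memB g) :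
    ∀ M > (0:ℝ), ∃ A > (0:ℝ), ∀ x ∈ orthant n,
      starC (expComp g) x ≤
        (∑ j ∈ Finset.univ.filter (fun j : Fin n => x j ≠ 0),
          (x j * Real.log (x j / M) - x j)) + A := by
  intro M hM
  obtain ⟨C, hC⟩ := hg.exists_mul_sum_sub_le hM.le
  refine ⟨max C 1, by positivity, fun x hx => ciSup_le fun y => ?_⟩
  rw [Finset.sum_filter_of_ne fun j _ h hj => by simp [hj] at h]
  calc ∑ j, x j * y j - expComp g y ≤ ∑ j, x j * y j - (M * ∑ j, Real.exp (y j) - C) :=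
        sub_le_sub_left (hC _ fun j => (Real.exp_pos (y j)).le) _
    _ = ∑ j, (x j * y j - M * Real.exp (y j)) + C := by
        rw [Finset.sum_sub_distrib, Finset.mul_sum]
        ring
    _ ≤ ∑ j, (x j * Real.log (x j / M) - x j) + max C 1 := by
        refine add_le_add (Finset.sum_le_sum fun j _ => ?_) (le_max_left C 1)
        exact mul_sub_mul_exp_le_mul_log_div_sub _ (hx j) hM
end
end

section
/- Let u ∈ ℬ(ℝⁿ). Then for each δ > 0, (u*((1+δ)x) − u*(x))/‖x‖ → +∞ as ‖x‖ → ∞. -/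
/-!
The conjugate `u*` is a finite convex function, and it is superlinear: testing the supremum at
`y = R z / ‖z‖` gives `u*(z) ≥ R ‖z‖ - max_{‖y‖ ≤ |R|} u y`. Convexity on the segment from `0` to
`(1 + δ) x` gives `u*((1 + δ) x) - u*(x) ≥ δ / (1 + δ) · (u*((1 + δ) x) - u*(0))`, so the difference
inherits the superlinear growth of `u*`.
-/

open Filter
open scoped BigOperators Topology

noncomputable section

/-- `g ∈ ℬ(ℝⁿ)`: `g` is continuous on `ℝⁿ` and `g(x)/‖x‖ → +∞` as `x → ∞`. -/
def memBR {n : ℕ} (g : En n → ℝ) : Prop :=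
  Continuous g ∧ Tendsto (fun x : En n => g x / ‖x‖) (cocompact (En n)) atTop

open Set
open scoped RealInnerProductSpace

def IsSuperlinear {E : Type*} [Norm E] (f : E → ℝ) : Prop :=
  ∀ R : ℝ, ∃ C : ℝ, ∀ z, R * ‖z‖ - C ≤ f z

section NormedSpace

variable {E : Type*} [NormedAddCommGroup E]

theorem isSuperlinear_of_tendsto_div_norm [ProperSpace E] {g : E → ℝ} (hc : Continuous g)
    (hg : Tendsto (fun x => g x / ‖x‖) (cocompact E) atTop) : IsSuperlinear g := by
  intro R
  have hlim : Tendsto (fun y => g y - R * ‖y‖) (cocompact E) atTop := by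
    refine tendsto_atTop_mono' _ ?_ tendsto_norm_cocompact_atTop
    filter_upwards [hg.eventually_ge_atTop (R + 1),
      tendsto_norm_cocompact_atTop.eventually_gt_atTop 0] with y hgy hy
    rw [le_div_iff₀ hy] at hgy
    linarith
  obtain ⟨y₀, hy₀⟩ := Continuous.exists_forall_le (by fun_prop) hlim
  exact ⟨R * ‖y₀‖ - g y₀, fun y => by linarith [hy₀ y]⟩

theorem IsSuperlinear.tendsto_div_norm [ProperSpace E] {f : E → ℝ} (hf : IsSuperlinear f) :
    Tendsto (fun z => f z / ‖z‖) (cocompact E) atTop := by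
  refine tendsto_atTop.2 fun b => ?_
  obtain ⟨C, hC⟩ := hf (b + 1)
  filter_upwards [tendsto_norm_cocompact_atTop.eventually_ge_atTop C,
    tendsto_norm_cocompact_atTop.eventually_gt_atTop 0] with z hzC hz
  rw [le_div_iff₀ hz]
  linarith [hC z]

variable [NormedSpace ℝ E]

theorem ConvexOn.mul_le_apply_smul_add {f : E → ℝ} (hf : ConvexOn ℝ univ f) {c : ℝ}
    (hc : 1 ≤ c) (x : E) : c * f x ≤ f (c • x) + (c - 1) * f 0 := by
  have hc₀ : 0 < c := by linarith
  have hx : c⁻¹ • c • x + (1 - c⁻¹) • (0 : E) = x := by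
    rw [smul_smul, inv_mul_cancel₀ hc₀.ne', one_smul, smul_zero, add_zero]
  have h := hf.2 (mem_univ (c • x)) (mem_univ 0) (inv_nonneg.2 hc₀.le)
    (sub_nonneg.2 (inv_le_one_of_one_le₀ hc)) (add_sub_cancel _ _)
  rw [hx, smul_eq_mul, smul_eq_mul] at h
  calc c * f x ≤ c * (c⁻¹ * f (c • x) + (1 - c⁻¹) * f 0) := by gcongr
    _ = f (c • x) + (c - 1) * f 0 := by field_simp

theorem ConvexOn.isSuperlinear_apply_smul_sub {f : E → ℝ} (hconv : ConvexOn ℝ univ f)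
    (hf : IsSuperlinear f) {c : ℝ} (hc : 1 < c) : IsSuperlinear fun x => f (c • x) - f x := by
  intro R
  have hc₀ : 0 < c := by linarith
  have hc₁ : 0 < c - 1 := by linarith
  obtain ⟨C, hC⟩ := hf (R / (c - 1))
  refine ⟨(c - 1) * (C + f 0) / c, fun x => ?_⟩
  have hconvx := hconv.mul_le_apply_smul_add hc.le x
  have hgrowth := hC (c • x)
  rw [norm_smul, Real.norm_of_nonneg hc₀.le] at hgrowth
  refine le_of_mul_le_mul_left ?_ hc₀
  calc c * (R * ‖x‖ - (c - 1) * (C + f 0) / c)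
      = (c - 1) * (R / (c - 1) * (c * ‖x‖) - C) - (c - 1) * f 0 := by field_simp; ring
    _ ≤ (c - 1) * f (c • x) - (c - 1) * f 0 := by gcongr
    _ ≤ c * (f (c • x) - f x) := by linarith

end NormedSpace

section Conjugate

variable {n : ℕ} {u : En n → ℝ}

theorem starC_eq_iSup_inner (u : En n → ℝ) (x : En n) :
    starC u x = ⨆ y, ⟪x, y⟫ - u y := by
  simp [starC, PiLp.inner_apply, mul_comm]

theorem IsSuperlinear.bddAbove_range_inner_sub (hu : IsSuperlinear u) (x : En n) :
    BddAbove (range fun y => ⟪x, y⟫ - u y) := by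
  obtain ⟨C, hC⟩ := hu ‖x‖
  refine ⟨C, forall_mem_range.2 fun y => ?_⟩
  linarith [real_inner_le_norm x y, hC y]

theorem IsSuperlinear.inner_sub_le_starC (hu : IsSuperlinear u) (x y : En n) :
    ⟪x, y⟫ - u y ≤ starC u x := by
  rw [starC_eq_iSup_inner]
  exact le_ciSup (hu.bddAbove_range_inner_sub x) y

theorem IsSuperlinear.convexOn_starC (hu : IsSuperlinear u) : ConvexOn ℝ univ (starC u) := by
  refine ⟨convex_univ, fun x _ x' _ a b ha hb hab => ?_⟩
  rw [starC_eq_iSup_inner]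
  refine ciSup_le fun y => ?_
  calc ⟪a • x + b • x', y⟫ - u y = a * (⟪x, y⟫ - u y) + b * (⟪x', y⟫ - u y) := by
        rw [inner_add_left, real_inner_smul_left, real_inner_smul_left]
        linear_combination u y * hab
    _ ≤ a • starC u x + b • starC u x' := by
        rw [smul_eq_mul, smul_eq_mul]
        gcongr <;> exact hu.inner_sub_le_starC _ y

theorem IsSuperlinear.isSuperlinear_starC (hc : Continuous u) (hu : IsSuperlinear u) :
    IsSuperlinear (starC u) := by
  intro R
  obtain ⟨C, hC⟩ := (isCompact_closedBall (0 : En n) |R|).bddAbove_image hc.continuousOn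
  refine ⟨C, fun z => ?_⟩
  obtain ⟨y, hy, hzy⟩ : ∃ y ∈ Metric.closedBall (0 : En n) |R|, ⟪z, y⟫ = R * ‖z‖ := by
    rcases eq_or_ne ‖z‖ 0 with hz | hz
    · exact ⟨0, by simp, by simp [hz]⟩
    · refine ⟨(R / ‖z‖) • z, ?_, ?_⟩
      · rw [mem_closedBall_zero_iff, norm_smul, norm_div, norm_norm, div_mul_cancel₀ _ hz,
          Real.norm_eq_abs]
      · rw [real_inner_smul_right, real_inner_self_eq_norm_sq]
        field_simp
  linarith [hu.inner_sub_le_starC z y, hC (mem_image_of_mem u hy)]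

end Conjugate

theorem stmt11 (n : ℕ) (u : En n → ℝ) (hu : memBR u) :
    ∀ δ > (0:ℝ),
      Tendsto (fun x : En n => (starC u ((1 + δ) • x) - starC u x) / ‖x‖)
        (cocompact (En n)) atTop := by
  intro δ hδ
  have hsuper : IsSuperlinear u := isSuperlinear_of_tendsto_div_norm hu.1 hu.2
  exact (hsuper.convexOn_starC.isSuperlinear_apply_smul_sub
    (hsuper.isSuperlinear_starC hu.1) (by linarith)).tendsto_div_norm
end
end

section
/- Let u ∈ ℬ(ℝⁿ). Then for all x = (x₁,…,xₙ) ∈ [0,∞)ⁿ with x ≠ 0, (u[e])*(x) + (u*[e])*(x) ≤ Σ_{1≤j≤n, x_j≠0} (x_j·ln x_j − x_j), and (u[e])*(0) + (u*[e])*(0) ≤ 0. -/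
open Filter
open scoped BigOperators Topology

noncomputable section

open scoped RealInnerProductSpace

/-!
For `x ≥ 0` and arbitrary `s, t ∈ ℝⁿ`, the Fenchel–Young inequality `u*(e^t) ≥ ⟨e^t, e^s⟩ - u(e^s)`
(valid because `u ∈ ℬ(ℝⁿ)` makes `u*` a genuine supremum) gives
`⟨x, s⟩ - u[e](s) + ⟨x, t⟩ - u*[e](t) ≤ Σⱼ (xⱼ (sⱼ + tⱼ) - e^{sⱼ + tⱼ})`,
and each summand is at most `xⱼ ln xⱼ - xⱼ`, the value of the conjugate of `exp` at `xⱼ`.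
Taking suprema over `s` and `t` gives the bound.
-/

section Coercive

variable {E : Type*} [NormedAddCommGroup E] [InnerProductSpace ℝ E] [ProperSpace E]

lemma tendsto_sub_inner_cocompact_atTop {f : E → ℝ}
    (hf : Tendsto (fun y => f y / ‖y‖) (cocompact E) atTop) (z : E) :
    Tendsto (fun y => f y - ⟪z, y⟫) (cocompact E) atTop := by
  have hprod : Tendsto (fun y => ‖y‖ * (f y / ‖y‖ - ‖z‖)) (cocompact E) atTop :=
    tendsto_norm_cocompact_atTop.atTop_mul_atTop₀ (tendsto_atTop_add_const_right _ _ hf)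
  refine tendsto_atTop_mono' _ ?_ hprod
  filter_upwards [tendsto_norm_cocompact_atTop.eventually_gt_atTop 0] with y hy
  rw [mul_sub, mul_div_cancel₀ _ hy.ne']
  linarith [real_inner_le_norm z y]

lemma bddAbove_range_inner_sub {f : E → ℝ} (hc : Continuous f)
    (hf : Tendsto (fun y => f y / ‖y‖) (cocompact E) atTop) (z : E) :
    BddAbove (Set.range fun y => ⟪z, y⟫ - f y) := by
  have hcont : Continuous fun y => f y - ⟪z, y⟫ := hc.sub (continuous_const.inner continuous_id)
  obtain ⟨y₀, hy₀⟩ := hcont.exists_forall_le (tendsto_sub_inner_cocompact_atTop hf z)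
  exact ⟨⟪z, y₀⟫ - f y₀, Set.forall_mem_range.2 fun y => by linarith [hy₀ y]⟩

end Coercive

lemma sum_mul_eq_inner {n : ℕ} (x y : En n) : ∑ j, x j * y j = ⟪x, y⟫ := by
  simp [PiLp.inner_apply, mul_comm]

lemma sum_mul_sub_le_starC {n : ℕ} {u : En n → ℝ} (hu : memBR u) (x y : En n) :
    ∑ j, x j * y j - u y ≤ starC u x := by
  simp only [starC, sum_mul_eq_inner]
  exact le_ciSup (bddAbove_range_inner_sub hu.1 hu.2 x) y

-- At `a = 0` the right-hand side is `0` because `Real.log 0 = 0`.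
lemma mul_sub_exp_le_mul_log_sub {a : ℝ} (ha : 0 ≤ a) (r : ℝ) :
    a * r - Real.exp r ≤ a * Real.log a - a := by
  rcases ha.eq_or_lt with rfl | ha
  · simp [(Real.exp_pos r).le]
  have h : Real.exp r = a * Real.exp (r - Real.log a) := by
    rw [Real.exp_sub, Real.exp_log ha, mul_div_cancel₀ _ ha.ne']
  nlinarith [Real.add_one_le_exp (r - Real.log a)]

lemma starC_expComp_add_starC_expComp_starC_le {n : ℕ} {u : En n → ℝ} (hu : memBR u)
    {x : En n} (hx : x ∈ orthant n) :
    starC (expComp u) x + starC (expComp (starC u)) x ≤ ∑ j, (x j * Real.log (x j) - x j) := by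
  refine ciSup_add_ciSup_le fun s t => ?_
  have hFY := sum_mul_sub_le_starC hu (WithLp.toLp 2 fun j => Real.exp (t j))
    (WithLp.toLp 2 fun j => Real.exp (s j))
  have hsum : ∑ j, (x j * s j + x j * t j - Real.exp (t j) * Real.exp (s j)) ≤
      ∑ j, (x j * Real.log (x j) - x j) :=
    Finset.sum_le_sum fun j _ => by
      rw [← Real.exp_add, ← mul_add, add_comm (t j)]
      exact mul_sub_exp_le_mul_log_sub (hx j) _
  simp only [Finset.sum_sub_distrib, Finset.sum_add_distrib] at hsum ⊢
  simp only [expComp] at hFY ⊢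
  linarith

theorem stmt12 (n : ℕ) (u : En n → ℝ) (hu : memBR u) :
    (∀ x ∈ orthant n, x ≠ 0 →
      starC (expComp u) x + starC (expComp (starC u)) x ≤
        ∑ j ∈ Finset.univ.filter (fun j : Fin n => x j ≠ 0),
          (x j * Real.log (x j) - x j)) ∧
    starC (expComp u) 0 + starC (expComp (starC u)) 0 ≤ 0 := by
  refine ⟨fun x hx _ => ?_, ?_⟩
  · rw [Finset.sum_filter_of_ne (p := fun j => x j ≠ 0) fun j _ h hj => h (by simp [hj])]
    exact starC_expComp_add_starC_expComp_starC_le hu hx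
  · simpa using starC_expComp_add_starC_expComp_starC_le hu (x := 0) fun _ => le_rfl
end
end

section
/- Let u ∈ ℬ(ℝⁿ) ∩ C²(ℝⁿ) be convex. Then for all x = (x₁,…,xₙ) ∈ (0,∞)ⁿ, (u[e])*(x) + (u*[e])*(x) = Σ_{j=1}^n (x_j·ln x_j − x_j). -/
/-!
Fix `x` with positive coordinates. Superlinear growth of `u` makes `y ↦ ⟨x, y⟩ - u(e^y)` attain
its maximum at some `y₀`; at `p = e^{y₀}` the first-order condition reads `∇u(p)_j p_j = x_j`.
By convexity `q = ∇u(p)` is a supporting slope, so `u*(q) = ⟨q, p⟩ - u(p) = ∑ x_j - u(p)`.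
For the second conjugate, `u*(e^z) ≥ ⟨e^z, p⟩ - u(p)` together with the scalar Fenchel inequality
`a t - e^t ≤ a log a - a` bounds `⟨x, z⟩ - u*(e^z)`, with equality at `z = log x - y₀`, where
`e^z = q`. The two suprema then add up to `∑ (x_j log x_j - x_j)`.
-/

open Filter
open scoped BigOperators Topology

noncomputable section

open Set Real

theorem exists_forall_mul_norm_sub_le {E : Type*} [NormedAddCommGroup E] [ProperSpace E]
    {u : E → ℝ} (hc : Continuous u)
    (hu : Tendsto (fun x => u x / ‖x‖) (cocompact E) atTop) (C : ℝ) :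
    ∃ D, ∀ x, C * ‖x‖ - D ≤ u x := by
  have hlim : Tendsto (fun x => u x - C * ‖x‖) (cocompact E) atTop := by
    refine tendsto_atTop_mono' _ ?_ tendsto_norm_cocompact_atTop
    filter_upwards [hu.eventually_ge_atTop (C + 1),
      tendsto_norm_cocompact_atTop.eventually_gt_atTop 0] with x hx hpos
    rw [le_div_iff₀ hpos] at hx
    linarith
  obtain ⟨x₀, hx₀⟩ := (show Continuous fun x => u x - C * ‖x‖ by fun_prop).exists_forall_le hlim
  exact ⟨C * ‖x₀‖ - u x₀, fun x => by linarith [hx₀ x]⟩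

theorem tendsto_sum_apply_coprodᵢ {ι : Type*} [Fintype ι] {X : ι → Type*}
    {l : ∀ i, Filter (X i)} {g : ∀ i, X i → ℝ} (hg : ∀ i, Tendsto (g i) (l i) atTop)
    (hb : ∀ i, ∃ m, ∀ t, m ≤ g i t) :
    Tendsto (fun y => ∑ i, g i (y i)) (Filter.coprodᵢ l) atTop := by
  choose m hm using hb
  refine tendsto_iSup.2 fun i => ?_
  have hsplit : ∀ y : ∀ i, X i, g i (y i) + (∑ k, m k - m i) ≤ ∑ k, g k (y k) := by
    intro y
    have := Finset.single_le_sum (f := fun k => g k (y k) - m k)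
      (fun k _ => sub_nonneg.2 (hm k (y k))) (Finset.mem_univ i)
    simp only [Finset.sum_sub_distrib] at this
    linarith
  exact tendsto_atTop_mono hsplit
    (tendsto_atTop_add_const_right _ _ ((hg i).comp tendsto_comap))

theorem mul_sub_exp_le {a : ℝ} (ha : 0 < a) (t : ℝ) : a * t - exp t ≤ a * log a - a := by
  have h := add_one_le_exp (t - log a)
  rw [exp_sub, exp_log ha, le_div_iff₀ ha] at h
  linarith

theorem tendsto_exp_sub_mul_cocompact {a : ℝ} (ha : 0 < a) :
    Tendsto (fun t => exp t - a * t) (cocompact ℝ) atTop := by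
  rw [cocompact_eq_atBot_atTop, tendsto_sup]
  constructor
  · refine tendsto_atTop_mono (fun t => ?_) (tendsto_neg_atBot_atTop.const_mul_atTop ha)
    linarith [exp_pos t]
  · refine tendsto_atTop_mono (fun t => ?_)
      (tendsto_atTop_add_const_right _ ((a + 1) - (a + 1) * log (a + 1)) tendsto_id)
    have := mul_sub_exp_le (by linarith : 0 < a + 1) t
    simp only [id]
    linarith

theorem ConvexOn.add_fderiv_sub_le {E : Type*} [NormedAddCommGroup E] [NormedSpace ℝ E]
    {f : E → ℝ} {f' : E →L[ℝ] ℝ} {x : E} (hf : ConvexOn ℝ univ f) (hd : HasFDerivAt f f' x)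
    (y : E) : f x + f' (y - x) ≤ f y := by
  have hd' : HasFDerivAt f f' (AffineMap.lineMap x y (0 : ℝ)) := by simpa using hd
  have := (hf.comp_affineMap (AffineMap.lineMap x y)).le_slope_of_hasDerivAt
    (mem_univ 0) (mem_univ 1) zero_lt_one (hd'.comp_hasDerivAt 0 AffineMap.hasDerivAt_lineMap)
  simp only [slope_def_field, Function.comp_apply, AffineMap.lineMap_apply_zero,
    AffineMap.lineMap_apply_one, sub_zero, div_one] at this
  linarith

open scoped Gradient RealInnerProductSpace

section Euclidean

variable {n : ℕ}

def expVec (y : En n) : En n := WithLp.toLp 2 fun j => exp (y j)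

theorem expComp_apply (g : En n → ℝ) (y : En n) : expComp g y = g (expVec y) := rfl

theorem continuous_expVec : Continuous (expVec (n := n)) := by
  unfold expVec; fun_prop

theorem inner_eq_sum_mul (a b : En n) : ⟪a, b⟫ = ∑ j, a j * b j := by
  simp [PiLp.inner_apply, mul_comm]

theorem hasDerivAt_expVec_add_smul (y v : En n) :
    HasDerivAt (fun t : ℝ => expVec (y + t • v)) (WithLp.toLp 2 fun j => exp (y j) * v j) 0 := by
  have hcoord : HasDerivAt (fun t : ℝ => fun j => exp (y j + t * v j))
      (fun j => exp (y j) * v j) 0 :=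
    hasDerivAt_pi.2 fun j => by
      simpa using (((hasDerivAt_id (0 : ℝ)).mul_const (v j)).const_add (y j)).exp
  exact (PiLp.hasFDerivAt_toLp 2 _).comp_hasDerivAt 0 hcoord

theorem tendsto_sum_exp_sub_mul_cocompact {x : En n} (hx : ∀ j, 0 < x j) :
    Tendsto (fun y : En n => ∑ j, (exp (y j) - x j * y j)) (cocompact (En n)) atTop := by
  have h := tendsto_sum_apply_coprodᵢ (fun j => tendsto_exp_sub_mul_cocompact (hx j))
    (fun j => ⟨x j - x j * log (x j), fun t => by linarith [mul_sub_exp_le (hx j) t]⟩)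
  rw [coprodᵢ_cocompact] at h
  rw [← (PiLp.homeomorph 2 fun _ : Fin n => ℝ).comap_cocompact]
  exact h.comp tendsto_comap

theorem le_starC {g : En n → ℝ} {x : En n}
    (hb : BddAbove (range fun y => ∑ j, x j * y j - g y)) (y : En n) :
    ∑ j, x j * y j - g y ≤ starC g x :=
  le_ciSup hb y

theorem starC_eq {g : En n → ℝ} {x : En n} {c : ℝ} (hle : ∀ y, ∑ j, x j * y j - g y ≤ c)
    (y₀ : En n) (heq : ∑ j, x j * y₀ j - g y₀ = c) : starC g x = c :=
  le_antisymm (ciSup_le hle) (heq ▸ le_ciSup ⟨c, forall_mem_range.2 hle⟩ y₀)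

variable {u : En n → ℝ}

theorem memBR.exists_sum_mul_sub_le (hu : memBR u) (w : En n) :
    ∃ D, ∀ v, ∑ j, w j * v j - u v ≤ D := by
  obtain ⟨D, hD⟩ := exists_forall_mul_norm_sub_le hu.1 hu.2 ‖w‖
  refine ⟨D, fun v => ?_⟩
  have := real_inner_le_norm w v
  rw [inner_eq_sum_mul] at this
  linarith [hD v]

theorem memBR.bddAbove (hu : memBR u) (w : En n) :
    BddAbove (range fun v => ∑ j, w j * v j - u v) :=
  let ⟨D, hD⟩ := hu.exists_sum_mul_sub_le w
  ⟨D, forall_mem_range.2 hD⟩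

theorem memBR.exists_forall_sum_mul_sub_expComp_le (hu : memBR u) {x : En n}
    (hx : ∀ j, 0 < x j) :
    ∃ y₀, ∀ y, ∑ j, x j * y j - expComp u y ≤ ∑ j, x j * y₀ j - expComp u y₀ := by
  obtain ⟨D, hD⟩ := hu.exists_sum_mul_sub_le (WithLp.toLp 2 fun _ => 1)
  have hlim : Tendsto (fun y => expComp u y - ∑ j, x j * y j) (cocompact (En n)) atTop := by
    refine tendsto_atTop_mono (fun y => ?_)
      (tendsto_atTop_add_const_right _ (-D) (tendsto_sum_exp_sub_mul_cocompact hx))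
    have := hD (expVec y)
    simp only [expVec, one_mul] at this
    simp only [Finset.sum_sub_distrib, expComp_apply, expVec]
    linarith
  have hcont : Continuous fun y => expComp u y - ∑ j, x j * y j :=
    (hu.1.comp continuous_expVec).sub (by fun_prop)
  obtain ⟨y₀, hy₀⟩ := hcont.exists_forall_le hlim
  exact ⟨y₀, fun y => by linarith [hy₀ y]⟩

theorem gradient_mul_exp_eq_of_forall_le {x y₀ : En n}
    (hd : DifferentiableAt ℝ u (expVec y₀))
    (hmax : ∀ y, ∑ j, x j * y j - expComp u y ≤ ∑ j, x j * y₀ j - expComp u y₀) (j : Fin n) :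
    (∇ u (expVec y₀)) j * exp (y₀ j) = x j := by
  set e : En n := EuclideanSpace.single j 1
  have hlin : HasDerivAt (fun t : ℝ => ∑ i, x i * (y₀ + t • e) i) (x j) 0 := by
    have := HasDerivAt.fun_sum (u := Finset.univ) fun i _ =>
      (((hasDerivAt_id (0 : ℝ)).mul_const (e i)).const_add (y₀ i)).const_mul (x i)
    simpa [e, PiLp.single_apply] using this
  have hcomp : HasDerivAt (fun t : ℝ => u (expVec (y₀ + t • e)))
      ⟪∇ u (expVec y₀), WithLp.toLp 2 fun i => exp (y₀ i) * e i⟫ 0 := by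
    have hd' : HasFDerivAt u (InnerProductSpace.toDual ℝ (En n) (∇ u (expVec y₀)))
        (expVec (y₀ + (0 : ℝ) • e)) := by
      simpa using hd.hasGradientAt.hasFDerivAt
    exact hd'.comp_hasDerivAt 0 (hasDerivAt_expVec_add_smul y₀ e)
  have hmax' : IsLocalMax (fun t : ℝ => ∑ i, x i * (y₀ + t • e) i - u (expVec (y₀ + t • e))) 0 :=
    Eventually.of_forall fun t => by simpa [expComp_apply] using hmax (y₀ + t • e)
  have := hmax'.hasDerivAt_eq_zero (hlin.sub hcomp)
  rw [inner_eq_sum_mul] at this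
  simp only [e, PiLp.single_apply, mul_ite, mul_one, mul_zero, Finset.sum_ite_eq',
    Finset.mem_univ, if_true] at this
  linarith

theorem ConvexOn.sum_gradient_mul_sub_le (hconv : ConvexOn ℝ univ u) {p : En n}
    (hd : DifferentiableAt ℝ u p) (w : En n) :
    ∑ j, (∇ u p) j * w j - u w ≤ ∑ j, (∇ u p) j * p j - u p := by
  have := hconv.add_fderiv_sub_le hd.hasGradientAt.hasFDerivAt w
  rw [InnerProductSpace.toDual_apply_apply, inner_sub_right, inner_eq_sum_mul,
    inner_eq_sum_mul] at this
  linarith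

theorem starC_expComp_starC_eq (hu : memBR u) {x y₀ q : En n} (hx : ∀ j, 0 < x j)
    (hqx : ∀ j, q j * exp (y₀ j) = x j)
    (hq : ∀ w, ∑ j, q j * w j - u w ≤ ∑ j, q j * expVec y₀ j - u (expVec y₀)) :
    starC (expComp (starC u)) x =
      ∑ j, (x j * log (x j) - x j) - (∑ j, x j * y₀ j - expComp u y₀) := by
  have hstar_q : starC u q = ∑ j, x j - expComp u y₀ := by
    rw [starC_eq hq _ rfl, expComp_apply]
    congr 1
    exact Finset.sum_congr rfl fun j _ => hqx j
  refine starC_eq (fun z => ?_) (WithLp.toLp 2 fun j => log (x j) - y₀ j) ?_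
  · have hlow := le_starC (hu.bddAbove (expVec z)) (expVec y₀)
    have hterm : ∀ j, x j * z j - exp (z j) * exp (y₀ j) ≤ x j * log (x j) - x j - x j * y₀ j := by
      intro j
      have := mul_sub_exp_le (hx j) (z j + y₀ j)
      rw [exp_add] at this
      linarith
    have := Finset.sum_le_sum fun j (_ : j ∈ Finset.univ) => hterm j
    simp only [Finset.sum_sub_distrib, expVec, expComp_apply] at this hlow ⊢
    linarith
  · have hexp : expVec (WithLp.toLp 2 fun j => log (x j) - y₀ j) = q := by
      ext j
      rw [expVec, PiLp.toLp_apply, exp_sub, exp_log (hx j), ← hqx j,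
        mul_div_cancel_right₀ _ (exp_ne_zero _)]
    simp only [expComp_apply, hexp, hstar_q, Finset.sum_sub_distrib, mul_sub]
    ring

end Euclidean

theorem stmt13 (n : ℕ) (u : En n → ℝ) (hu : memBR u)
    (hC2 : ContDiff ℝ 2 u) (hconv : ConvexOn ℝ Set.univ u) :
    ∀ x : En n, (∀ j, 0 < x j) →
      starC (expComp u) x + starC (expComp (starC u)) x =
        ∑ j, (x j * Real.log (x j) - x j) := by
  intro x hx
  obtain ⟨y₀, hy₀⟩ := hu.exists_forall_sum_mul_sub_expComp_le hx
  have hd : DifferentiableAt ℝ u (expVec y₀) := (hC2.differentiable (by norm_num)).differentiableAt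
  rw [starC_eq hy₀ y₀ rfl, starC_expComp_starC_eq hu hx (gradient_mul_exp_eq_of_forall_le hd hy₀)
    (hconv.sum_gradient_mul_sub_le hd)]
  ring
end
end
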